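/- arXiv:2201.02222 — 7 statements merged into one kernel-verified Lean document; each statement's English description precedes it below -/
import Mathlib

section
/- Let P, O, Q1, Q2 be points in the Euclidean plane with Q1 ≠ Q2. Suppose dist(P,Q1) = dist(P,Q2) = ρ for some ρ > 0, dist(O,Q1) = dist(O,Q2) = r for some r > 0, and the (unsigned) angles satisfy ∠P Q1 O = π/2 and ∠P Q2 O = π/2. Then tan(∠Q1 P Q2 / 2) = r/ρ. -/
open Real EuclideanGeometry
open scoped EuclideanGeometry RealInnerProductSpace

set_option maxHeartbeats 1000000

theorem steiner_soddy_half_angle_tangent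
    (P O Q1 Q2 : EuclideanSpace ℝ (Fin 2)) (hQ : Q1 ≠ Q2)
    (ρ r : ℝ) (hρ : 0 < ρ) (hr : 0 < r)
    (hPQ1 : dist P Q1 = ρ) (hPQ2 : dist P Q2 = ρ)
    (hOQ1 : dist O Q1 = r) (hOQ2 : dist O Q2 = r)
    (h1 : ∠ P Q1 O = π / 2) (h2 : ∠ P Q2 O = π / 2) :
    Real.tan (∠ Q1 P Q2 / 2) = r / ρ := by
  haveI : Fact (Module.finrank ℝ (EuclideanSpace ℝ (Fin 2)) = 2) :=
    ⟨finrank_euclideanSpace_fin⟩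
  set u : EuclideanSpace ℝ (Fin 2) := Q1 - P with hu_def
  set v : EuclideanSpace ℝ (Fin 2) := Q2 - P with hv_def
  set a : EuclideanSpace ℝ (Fin 2) := O - P with ha_def
  have hu : ‖u‖ = ρ := by rw [hu_def, ← neg_sub, norm_neg, ← dist_eq_norm]; exact hPQ1
  have hv : ‖v‖ = ρ := by rw [hv_def, ← neg_sub, norm_neg, ← dist_eq_norm]; exact hPQ2
  have hw1 : ‖O - Q1‖ = r := by rw [← dist_eq_norm]; exact hOQ1
  have hi1 : ⟪P - Q1, O - Q1⟫ = 0 :=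
    (InnerProductGeometry.inner_eq_zero_iff_angle_eq_pi_div_two _ _).2 h1
  have hi2 : ⟪P - Q2, O - Q2⟫ = 0 :=
    (InnerProductGeometry.inner_eq_zero_iff_angle_eq_pi_div_two _ _).2 h2
  -- key inner products
  have hua : ⟪u, a⟫ = ρ ^ 2 := by
    have h : ⟪u, a⟫ = ⟪u, O - Q1⟫ + ⟪u, Q1 - P⟫ := by
      rw [← inner_add_right]; congr 1; rw [ha_def]; abel
    rw [h, hu_def,
      show (Q1 - P : EuclideanSpace ℝ (Fin 2)) = -(P - Q1) by abel, inner_neg_left, hi1,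
      neg_zero, zero_add, inner_neg_right, inner_neg_left, neg_neg,
      real_inner_self_eq_norm_sq, ← neg_sub Q1 P, norm_neg, ← hu_def, hu]
  have hva : ⟪v, a⟫ = ρ ^ 2 := by
    have h : ⟪v, a⟫ = ⟪v, O - Q2⟫ + ⟪v, Q2 - P⟫ := by
      rw [← inner_add_right]; congr 1; rw [ha_def]; abel
    rw [h, hv_def,
      show (Q2 - P : EuclideanSpace ℝ (Fin 2)) = -(P - Q2) by abel, inner_neg_left, hi2,
      neg_zero, zero_add, inner_neg_right, inner_neg_left, neg_neg,
      real_inner_self_eq_norm_sq, ← neg_sub Q2 P, norm_neg, ← hv_def, hv]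
  have hna : ‖a‖ ^ 2 = ρ ^ 2 + r ^ 2 := by
    have h0 : ⟪O - Q1, Q1 - P⟫ = (0 : ℝ) := by
      rw [show (Q1 - P : EuclideanSpace ℝ (Fin 2)) = -(P - Q1) by abel, inner_neg_right,
        real_inner_comm, hi1, neg_zero]
    have h : a = (O - Q1) + (Q1 - P) := by rw [ha_def]; abel
    rw [h, @norm_add_sq_real, h0, hw1, ← hu_def, hu]; ring
  -- area form computation
  set o : Orientation ℝ (EuclideanSpace ℝ (Fin 2)) (Fin 2) :=
    (((stdOrthonormalBasis ℝ (EuclideanSpace ℝ (Fin 2))).toBasis.reindex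
      (finCongr finrank_euclideanSpace_fin))).orientation with ho_def
  have hωu : o.areaForm a u ^ 2 = ρ ^ 2 * r ^ 2 := by
    have h := o.inner_sq_add_areaForm_sq a u
    rw [real_inner_comm, hua, hna, hu] at h; nlinarith [h]
  have hωv : o.areaForm a v ^ 2 = ρ ^ 2 * r ^ 2 := by
    have h := o.inner_sq_add_areaForm_sq a v
    rw [real_inner_comm, hva, hna, hv] at h; nlinarith [h]
  have hmain : ρ ^ 2 * ρ ^ 2 + o.areaForm a u * o.areaForm a v
      = (ρ ^ 2 + r ^ 2) * ⟪u, v⟫ := by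
    have h : ⟪a, u⟫ * ⟪a, v⟫ + o.areaForm a u * o.areaForm a v = ‖a‖ ^ 2 * ⟪u, v⟫ :=
      o.inner_mul_inner_add_areaForm_mul_areaForm a u v
    have hau : ⟪a, u⟫ = ρ ^ 2 := by rw [real_inner_comm]; exact hua
    have hav : ⟪a, v⟫ = ρ ^ 2 := by rw [real_inner_comm]; exact hva
    rw [hau, hav, hna] at h
    exact h
  have hne : u ≠ v := by
    intro h
    apply hQ
    have h' : Q1 - P = Q2 - P := h
    have := congrArg (· + P) h'
    simpa using this
  have hden : (0 : ℝ) < ρ ^ 2 + r ^ 2 := by positivity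
  -- the two area forms must have opposite signs
  have hsign : o.areaForm a u * o.areaForm a v = -(ρ ^ 2 * r ^ 2) := by
    have hsq : (o.areaForm a u * o.areaForm a v - ρ ^ 2 * r ^ 2) *
        (o.areaForm a u * o.areaForm a v + ρ ^ 2 * r ^ 2) = 0 := by nlinarith [hωu, hωv]
    rcases mul_eq_zero.mp hsq with h | h
    · exfalso
      have hpos : o.areaForm a u * o.areaForm a v = ρ ^ 2 * r ^ 2 := by linarith
      rw [hpos] at hmain
      have huv : ⟪u, v⟫ = ρ ^ 2 := by
        have : (ρ ^ 2 + r ^ 2) * ⟪u, v⟫ = (ρ ^ 2 + r ^ 2) * ρ ^ 2 := by linarith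
        exact mul_left_cancel₀ (ne_of_gt hden) this
      have : ‖u - v‖ ^ 2 = 0 := by
        rw [@norm_sub_sq_real, hu, hv, huv]; ring
      have huv0 : u - v = 0 := by
        have := pow_eq_zero_iff (n := 2) (by norm_num) |>.mp
          (by rw [this] : ‖u - v‖ ^ 2 = 0)
        exact norm_eq_zero.mp this
      exact hne (sub_eq_zero.mp huv0)
    · linarith
  rw [hsign] at hmain
  have huv : ⟪u, v⟫ = (ρ ^ 2 * (ρ ^ 2 - r ^ 2)) / (ρ ^ 2 + r ^ 2) := by
    rw [eq_div_iff (ne_of_gt hden), mul_comm (⟪u, v⟫) (ρ ^ 2 + r ^ 2)]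
    linarith
  -- cosine of the apex angle
  set θ := ∠ Q1 P Q2 with hθ_def
  have hθeq : θ = InnerProductGeometry.angle u v := by
    rw [hθ_def, EuclideanGeometry.angle, hu_def, hv_def]
    norm_num [vsub_eq_sub]
  have hcos : Real.cos θ = (ρ ^ 2 - r ^ 2) / (ρ ^ 2 + r ^ 2) := by
    rw [hθeq, InnerProductGeometry.cos_angle, huv, hu, hv]
    field_simp
  have hθ0 : 0 ≤ θ := EuclideanGeometry.angle_nonneg _ _ _
  have hθπ : θ ≤ π := EuclideanGeometry.angle_le_pi _ _ _
  have h1c : 1 - Real.cos θ = 2 * r ^ 2 / (ρ ^ 2 + r ^ 2) := by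
    rw [hcos]; field_simp; ring
  have h2c : 1 + Real.cos θ = 2 * ρ ^ 2 / (ρ ^ 2 + r ^ 2) := by
    rw [hcos]; field_simp; ring
  rw [Real.tan_eq_sin_div_cos,
    Real.sin_half_eq_sqrt hθ0 (by linarith [Real.pi_pos] : θ ≤ 2 * π),
    Real.cos_half (by linarith [Real.pi_pos] : -π ≤ θ) hθπ,
    ← Real.sqrt_div (by nlinarith [Real.cos_le_one θ] : (0:ℝ) ≤ (1 - Real.cos θ) / 2),
    show (1 - Real.cos θ) / 2 / ((1 + Real.cos θ) / 2) = (r / ρ) ^ 2 by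
      rw [h1c, h2c]; field_simp]
  exact Real.sqrt_sq (by positivity)
end

section
/- Let ABC be a nondegenerate triangle in the Euclidean plane with sidelengths a = dist(B,C), b = dist(C,A), c = dist(A,B), semiperimeter s = (a+b+c)/2, inradius r, and interior angles A, B, C. Suppose there are a point O4 and a real r4 > 0 with dist(A,O4) = (s−a) + r4, dist(B,O4) = (s−b) + r4, dist(C,O4) = (s−c) + r4 (a circle of radius r4 externally tangent to the three pairwise tangent circles of radii s−a, s−b, s−c centered at the vertices), and a point O5 and a real r5 > 0 with dist(A,O5) = r5 − (s−a), dist(B,O5) = r5 − (s−b), dist(C,O5) = r5 − (s−c) (a circle of radius r5 internally tangent to, i.e. enclosing, the three circles). Then tan(A/2) + tan(B/2) + tan(C/2) = (r/2) · (1/r4 − 1/r5). -/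
open Real EuclideanGeometry
open scoped EuclideanGeometry

lemma soddy_dsq (p q : EuclideanSpace ℝ (Fin 2)) :
    dist p q ^ 2 = (p 0 - q 0)^2 + (p 1 - q 1)^2 := by
  rw [EuclideanSpace.dist_eq, Real.sq_sqrt (by positivity)]
  simp [Fin.sum_univ_two, Real.dist_eq, sq_abs]

lemma soddy_descartes (x1 y1 x2 y2 x3 y3 x4 y4 r1 r2 r3 p : ℝ)
    (h12 : (x1-x2)^2+(y1-y2)^2 = (r1+r2)^2)
    (h13 : (x1-x3)^2+(y1-y3)^2 = (r1+r3)^2)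
    (h14 : (x1-x4)^2+(y1-y4)^2 = (r1+p)^2)
    (h23 : (x2-x3)^2+(y2-y3)^2 = (r2+r3)^2)
    (h24 : (x2-x4)^2+(y2-y4)^2 = (r2+p)^2)
    (h34 : (x3-x4)^2+(y3-y4)^2 = (r3+p)^2) :
    (r2*r3*p + r1*r3*p + r1*r2*p + r1*r2*r3)^2
      = 2*((r2*r3*p)^2+(r1*r3*p)^2+(r1*r2*p)^2+(r1*r2*r3)^2) := by
  have key : (-2) * (r1+r2)^2 * (r1+r2)^2 * (r3+p)^2 + (-2) * (r1+r2)^2 * (r1+r3)^2 * (r2+r3)^2 + (2) * (r1+r2)^2 * (r1+r3)^2 * (r2+p)^2 + (2) * (r1+r2)^2 * (r1+r3)^2 * (r3+p)^2 + (2) * (r1+r2)^2 * (r1+p)^2 * (r2+r3)^2 + (-2) * (r1+r2)^2 * (r1+p)^2 * (r2+p)^2 + (2) * (r1+r2)^2 * (r1+p)^2 * (r3+p)^2 + (2) * (r1+r2)^2 * (r2+r3)^2 * (r3+p)^2 + (2) * (r1+r2)^2 * (r2+p)^2 * (r3+p)^2 + (-2) * (r1+r2)^2 * (r3+p)^2 *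 (r3+p)^2 + (-2) * (r1+r3)^2 * (r1+r3)^2 * (r2+p)^2 + (2) * (r1+r3)^2 * (r1+p)^2 * (r2+r3)^2 + (2) * (r1+r3)^2 * (r1+p)^2 * (r2+p)^2 + (-2) * (r1+r3)^2 * (r1+p)^2 * (r3+p)^2 + (2) * (r1+r3)^2 * (r2+r3)^2 * (r2+p)^2 + (-2) * (r1+r3)^2 * (r2+p)^2 * (r2+p)^2 + (2) * (r1+r3)^2 * (r2+p)^2 * (r3+p)^2 + (-2) * (r1+p)^2 * (r1+p)^2 * (r2+r3)^2 + (-2) * (r1+p)^2 * (r2+r3)^2 * (r2+r3)^2 + (2) * (r1+p)^2 * (r2+r3)^2 * (r2+p)^2 + (2) * (r1+p)^2 * (r2+r3)^2 * (r3+p)^2 + (-2) * (r2+r3)^2 * (r2+p)^2 * (r3+p)^2 = 0 := by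
    rw [← h12, ← h13, ← h14, ← h23, ← h24, ← h34]
    ring
  linear_combination key / 32

lemma soddy_infdist_line (p B C : EuclideanSpace ℝ (Fin 2)) (hBC : B ≠ C) :
    Metric.infDist p (affineSpan ℝ {B, C} : Set (EuclideanSpace ℝ (Fin 2)))
      = |(C 0 - B 0)*(p 1 - B 1) - (C 1 - B 1)*(p 0 - B 0)| / dist B C := by
  set u0 : ℝ := C 0 - B 0 with hu0
  set u1 : ℝ := C 1 - B 1 with hu1
  have hd : dist B C = Real.sqrt (u0^2 + u1^2) := by
    rw [show dist B C = Real.sqrt (dist B C ^2) from (Real.sqrt_sq dist_nonneg).symm, soddy_dsq]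
    rw [hu0, hu1]
    ring_nf
  have hdpos : (0:ℝ) < dist B C := dist_pos.2 hBC
  have hu2pos : (0:ℝ) < u0^2 + u1^2 := by
    by_contra h
    push_neg at h
    have h0 : u0 = 0 ∧ u1 = 0 := by constructor <;> nlinarith [sq_nonneg u0, sq_nonneg u1]
    rw [hd, h0.1, h0.2] at hdpos
    norm_num at hdpos
  set X : ℝ := u0*(p 1 - B 1) - u1*(p 0 - B 0) with hX
  set t : ℝ := (u0*(p 0 - B 0) + u1*(p 1 - B 1)) / (u0^2 + u1^2) with ht
  have hmemiff : ∀ y : EuclideanSpace ℝ (Fin 2),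
      y ∈ (affineSpan ℝ {B, C} : Set (EuclideanSpace ℝ (Fin 2))) →
        ∃ s : ℝ, y = s • (C - B) + B := by
    intro y hy
    have : (y - B) +ᵥ B ∈ affineSpan ℝ {B, C} := by simpa using hy
    obtain ⟨s, hs⟩ := (vadd_left_mem_affineSpan_pair (k := ℝ)).1 this
    exact ⟨s, by rw [show C -ᵥ B = C - B from rfl] at hs; rw [hs]; abel⟩
  have hcoord : ∀ (sc : ℝ) (i : Fin 2), (sc • (C - B) + B) i = sc * (C i - B i) + B i := by
    intro sc i
    simp [PiLp.smul_apply, PiLp.add_apply, PiLp.sub_apply]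
  have hdistsq : ∀ sc : ℝ, dist p (sc • (C - B) + B) ^ 2
      = ((p 0 - B 0) - sc*u0)^2 + ((p 1 - B 1) - sc*u1)^2 := by
    intro sc
    rw [soddy_dsq, hcoord, hcoord]
    ring
  have hlb : ∀ sc : ℝ, |X| / dist B C ≤ dist p (sc • (C - B) + B) := by
    intro sc
    have h1 : (|X| / dist B C)^2 ≤ dist p (sc • (C - B) + B) ^ 2 := by
      rw [div_pow, sq_abs, hdistsq]
      rw [div_le_iff₀ (by positivity)]
      rw [hd, Real.sq_sqrt (le_of_lt hu2pos)]
      have key : X^2 + (u0*((p 0 - B 0) - sc*u0) + u1*((p 1 - B 1) - sc*u1))^2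
          = (((p 0 - B 0) - sc*u0)^2 + ((p 1 - B 1) - sc*u1)^2) * (u0^2 + u1^2) := by
        rw [hX]; ring
      nlinarith [sq_nonneg (u0*((p 0 - B 0) - sc*u0) + u1*((p 1 - B 1) - sc*u1))]
    calc |X| / dist B C = Real.sqrt ((|X| / dist B C)^2) :=
          (Real.sqrt_sq (by positivity)).symm
      _ ≤ Real.sqrt (dist p (sc • (C - B) + B) ^ 2) := Real.sqrt_le_sqrt h1
      _ = dist p (sc • (C - B) + B) := Real.sqrt_sq dist_nonneg
  have hub : dist p (t • (C - B) + B) = |X| / dist B C := by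
    have h1 : dist p (t • (C - B) + B) ^ 2 = (|X| / dist B C)^2 := by
      rw [hdistsq, div_pow, sq_abs, hd, Real.sq_sqrt (le_of_lt hu2pos), ht]
      field_simp
      ring
    calc dist p (t • (C - B) + B) = Real.sqrt (dist p (t • (C - B) + B) ^ 2) :=
          (Real.sqrt_sq dist_nonneg).symm
      _ = Real.sqrt ((|X| / dist B C)^2) := by rw [h1]
      _ = |X| / dist B C := Real.sqrt_sq (by positivity)
  have hmem : (t • (C - B) + B) ∈ (affineSpan ℝ {B, C} : Set (EuclideanSpace ℝ (Fin 2))) := by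
    have := smul_vsub_vadd_mem_affineSpan_pair (k := ℝ) t B C
    simpa [vsub_eq_sub, vadd_eq_add] using this
  apply le_antisymm
  · rw [← hub]
    exact Metric.infDist_le_dist_of_mem hmem
  · rw [Metric.infDist_eq_iInf]
    have : Nonempty (affineSpan ℝ {B, C} : Set (EuclideanSpace ℝ (Fin 2))) := ⟨⟨_, hmem⟩⟩
    apply le_ciInf
    intro y
    obtain ⟨sc, hsc⟩ := hmemiff y y.2
    rw [hsc]
    exact hlb sc

lemma soddy_tan_half (θ S x y z rr : ℝ) (hθ0 : 0 ≤ θ) (hθπ : θ ≤ π)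
    (hx : 0 < x) (hy : 0 < y) (hz : 0 < z) (hS : S = x + y + z)
    (hr : rr = Real.sqrt (S*x*y*z) / S)
    (hcos : Real.cos θ * (2*(x+z)*(x+y)) = (x+z)^2 + (x+y)^2 - (y+z)^2) :
    Real.tan (θ/2) = rr / x := by
  have hSpos : 0 < S := by rw [hS]; linarith
  have hD : (0:ℝ) < (x+z)*(x+y) := by positivity
  have hcos1 : 1 - Real.cos θ = 2*y*z/((x+z)*(x+y)) := by
    field_simp
    nlinarith [hcos]
  have hcos2 : 1 + Real.cos θ = 2*(x*S)/((x+z)*(x+y)) := by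
    field_simp
    nlinarith [hcos, hS]
  rw [Real.tan_eq_sin_div_cos,
    Real.sin_half_eq_sqrt hθ0 (by linarith [Real.pi_pos]),
    Real.cos_half (by linarith [Real.pi_pos]) hθπ,
    hcos1, hcos2, hr]
  rw [show 2*y*z/((x+z)*(x+y))/2 = (y*z)/((x+z)*(x+y)) by ring,
      show 2*(x*S)/((x+z)*(x+y))/2 = (x*S)/((x+z)*(x+y)) by ring]
  rw [Real.sqrt_div (by positivity), Real.sqrt_div (by positivity)]
  have h1 : Real.sqrt (S*x*y*z) = Real.sqrt (x*S) * Real.sqrt (y*z) := by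
    rw [← Real.sqrt_mul (by positivity)]
    ring_nf
  have hq : (0:ℝ) < Real.sqrt ((x+z)*(x+y)) := Real.sqrt_pos.2 hD
  have h2 : (0:ℝ) < Real.sqrt (x*S) := Real.sqrt_pos.2 (by positivity)
  have h3 : Real.sqrt (x*S) ^ 2 = x*S := Real.sq_sqrt (by positivity)
  have hstep : Real.sqrt (y*z)/Real.sqrt ((x+z)*(x+y))
      / (Real.sqrt (x*S)/Real.sqrt ((x+z)*(x+y))) = Real.sqrt (y*z)/Real.sqrt (x*S) := by
    field_simp
  rw [hstep, h1]
  rw [div_div]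
  rw [div_eq_div_iff (by positivity) (by positivity)]
  nlinarith [h3, Real.sqrt_nonneg (y*z)]

theorem sum_half_angle_tangents_eq_soddy
    (A B C : EuclideanSpace ℝ (Fin 2))
    (hABC : AffineIndependent ℝ ![A, B, C])
    (a b c s r : ℝ)
    (ha : a = dist B C) (hb : b = dist C A) (hc : c = dist A B)
    (hs : s = (a + b + c) / 2)
    (I : EuclideanSpace ℝ (Fin 2))
    (hI : I = (a + b + c)⁻¹ • (a • A + b • B + c • C))
    (hrA : Metric.infDist I (affineSpan ℝ {B, C} : Set (EuclideanSpace ℝ (Fin 2))) = r)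
    (hrB : Metric.infDist I (affineSpan ℝ {C, A} : Set (EuclideanSpace ℝ (Fin 2))) = r)
    (hrC : Metric.infDist I (affineSpan ℝ {A, B} : Set (EuclideanSpace ℝ (Fin 2))) = r)
    (O4 : EuclideanSpace ℝ (Fin 2)) (r4 : ℝ) (hr4 : 0 < r4)
    (h4A : dist A O4 = (s - a) + r4) (h4B : dist B O4 = (s - b) + r4)
    (h4C : dist C O4 = (s - c) + r4)
    (O5 : EuclideanSpace ℝ (Fin 2)) (r5 : ℝ) (hr5 : 0 < r5)
    (h5A : dist A O5 = r5 - (s - a)) (h5B : dist B O5 = r5 - (s - b))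
    (h5C : dist C O5 = r5 - (s - c)) :
    Real.tan (∠ B A C / 2) + Real.tan (∠ A B C / 2) + Real.tan (∠ B C A / 2) =
      r / 2 * (1 / r4 - 1 / r5) := by
  -- distinctness
  have hABne : A ≠ B := by
    intro h
    exact (by decide : (0:Fin 3) ≠ 1) (hABC.injective (by simpa using h))
  have hBCne : B ≠ C := by
    intro h
    exact (by decide : (1:Fin 3) ≠ 2) (hABC.injective (by simpa using h))
  have hCAne : C ≠ A := by
    intro h
    exact (by decide : (2:Fin 3) ≠ 0) (hABC.injective (by simpa using h))
  have hncol : ¬ Collinear ℝ ({A, B, C} : Set (EuclideanSpace ℝ (Fin 2))) :=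
    affineIndependent_iff_not_collinear_set.1 hABC
  -- positivity of sides
  have hapos : 0 < a := ha ▸ dist_pos.2 hBCne
  have hbpos : 0 < b := hb ▸ dist_pos.2 hCAne
  have hcpos : 0 < c := hc ▸ dist_pos.2 hABne
  -- strict triangle inequalities
  have htriA : a < b + c := by
    rcases lt_or_eq_of_le (dist_triangle B A C) with h | h
    · rw [dist_comm B A, dist_comm A C] at h
      rw [ha, hb, hc]; linarith
    · exfalso
      have hw : Wbtw ℝ B A C := dist_add_dist_eq_iff.1 h.symm
      have hcol := hw.collinear
      refine hncol (hcol.subset ?_)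
      intro x hx; simp at hx ⊢; tauto
  have htriB : b < a + c := by
    rcases lt_or_eq_of_le (dist_triangle C B A) with h | h
    · rw [dist_comm C B, dist_comm B A] at h
      rw [ha, hb, hc]; linarith
    · exfalso
      have hw : Wbtw ℝ C B A := dist_add_dist_eq_iff.1 h.symm
      have hcol := hw.collinear
      refine hncol (hcol.subset ?_)
      intro x hx; simp at hx ⊢; tauto
  have htriC : c < a + b := by
    rcases lt_or_eq_of_le (dist_triangle A C B) with h | h
    · rw [dist_comm A C, dist_comm C B] at h
      rw [ha, hb, hc]; linarith
    · exfalso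
      have hw : Wbtw ℝ A C B := dist_add_dist_eq_iff.1 h.symm
      have hcol := hw.collinear
      refine hncol (hcol.subset ?_)
      intro x hx; simp at hx ⊢; tauto
  have hxpos : 0 < s - a := by rw [hs]; linarith
  have hypos : 0 < s - b := by rw [hs]; linarith
  have hzpos : 0 < s - c := by rw [hs]; linarith
  have hspos : 0 < s := by rw [hs]; linarith
  -- coordinate forms of squared side lengths
  have ha2 : (B 0 - C 0)^2 + (B 1 - C 1)^2 = a^2 := by
    rw [ha]; exact (soddy_dsq B C).symm
  have hb2 : (C 0 - A 0)^2 + (C 1 - A 1)^2 = b^2 := by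
    rw [hb]; exact (soddy_dsq C A).symm
  have hc2 : (A 0 - B 0)^2 + (A 1 - B 1)^2 = c^2 := by
    rw [hc]; exact (soddy_dsq A B).symm
  set X : ℝ := (C 0 - B 0)*(A 1 - B 1) - (C 1 - B 1)*(A 0 - B 0) with hX
  have hX2 : X^2 = 4*(s*(s-a)*(s-b)*(s-c)) := by
    have h4 : 4*X^2 = 2*(a^2*b^2) + 2*(b^2*c^2) + 2*(c^2*a^2)
        - ((a^2)^2 + (b^2)^2 + (c^2)^2) := by
      rw [← ha2, ← hb2, ← hc2, hX]; ring
    rw [hs]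
    linear_combination h4 / 4
  -- inradius value
  have hsum_ne : a + b + c ≠ 0 := by positivity
  have hI0 : I 0 = (a+b+c)⁻¹*(a*A 0 + b*B 0 + c*C 0) := by
    rw [hI]; simp [PiLp.smul_apply, PiLp.add_apply]; ring
  have hI1 : I 1 = (a+b+c)⁻¹*(a*A 1 + b*B 1 + c*C 1) := by
    rw [hI]; simp [PiLp.smul_apply, PiLp.add_apply]; ring
  have hN : (C 0 - B 0)*(I 1 - B 1) - (C 1 - B 1)*(I 0 - B 0) = a/(a+b+c)*X := by
    rw [hI0, hI1, hX]; field_simp; ring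
  have hrv : r = |X| / (2*s) := by
    rw [← hrA, soddy_infdist_line I B C hBCne, hN, ← ha, abs_mul,
      abs_of_pos (show (0:ℝ) < a/(a+b+c) by positivity), hs]
    field_simp
  have hrval : r = Real.sqrt (s*(s-a)*(s-b)*(s-c)) / s := by
    rw [hrv, ← Real.sqrt_sq_eq_abs, hX2,
      show (4:ℝ)*(s*(s-a)*(s-b)*(s-c)) = 2^2*(s*(s-a)*(s-b)*(s-c)) by ring,
      Real.sqrt_mul (by norm_num : (0:ℝ) ≤ 2^2),
      Real.sqrt_sq (by norm_num : (0:ℝ) ≤ 2)]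
    rw [div_eq_div_iff (by positivity) (ne_of_gt hspos)]
    ring
  -- tangent of half angles
  have htanA : Real.tan (∠ B A C / 2) = r / (s - a) := by
    refine soddy_tan_half (∠ B A C) s (s-a) (s-b) (s-c) r (angle_nonneg B A C)
      (angle_le_pi B A C) hxpos hypos hzpos (by rw [hs]; ring) hrval ?_
    have hlaw := EuclideanGeometry.law_cos B A C
    rw [dist_comm B A, ← hc, ← hb, ← ha] at hlaw
    rw [hs]
    linear_combination hlaw
  have htanB : Real.tan (∠ A B C / 2) = r / (s - b) := by
    refine soddy_tan_half (∠ A B C) s (s-b) (s-a) (s-c) r (angle_nonneg A B C)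
      (angle_le_pi A B C) hypos hxpos hzpos (by rw [hs]; ring) ?_ ?_
    · rw [hrval]; congr 1; rw [hs]; ring
    have hlaw := EuclideanGeometry.law_cos A B C
    rw [dist_comm A C, ← hb, ← hc, dist_comm C B, ← ha] at hlaw
    rw [hs]
    linear_combination hlaw
  have htanC : Real.tan (∠ B C A / 2) = r / (s - c) := by
    refine soddy_tan_half (∠ B C A) s (s-c) (s-a) (s-b) r (angle_nonneg B C A)
      (angle_le_pi B C A) hzpos hxpos hypos (by rw [hs]; ring) ?_ ?_
    · rw [hrval]; congr 1; rw [hs]; ring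
    have hlaw := EuclideanGeometry.law_cos B C A
    rw [dist_comm B A, ← hc, ← ha, dist_comm A C, ← hb] at hlaw
    rw [hs]
    linear_combination hlaw
  -- Descartes circle relations
  have hcAB : (A 0 - B 0)^2 + (A 1 - B 1)^2 = ((s-a)+(s-b))^2 := by
    rw [← soddy_dsq A B, ← hc, hs]; ring
  have hcAC : (A 0 - C 0)^2 + (A 1 - C 1)^2 = ((s-a)+(s-c))^2 := by
    rw [← soddy_dsq A C, dist_comm A C, ← hb, hs]; ring
  have hcBC : (B 0 - C 0)^2 + (B 1 - C 1)^2 = ((s-b)+(s-c))^2 := by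
    rw [← soddy_dsq B C, ← ha, hs]; ring
  have hcAO4 : (A 0 - O4 0)^2 + (A 1 - O4 1)^2 = ((s-a)+r4)^2 := by
    rw [← soddy_dsq A O4, h4A]
  have hcBO4 : (B 0 - O4 0)^2 + (B 1 - O4 1)^2 = ((s-b)+r4)^2 := by
    rw [← soddy_dsq B O4, h4B]
  have hcCO4 : (C 0 - O4 0)^2 + (C 1 - O4 1)^2 = ((s-c)+r4)^2 := by
    rw [← soddy_dsq C O4, h4C]
  have hcAO5 : (A 0 - O5 0)^2 + (A 1 - O5 1)^2 = ((s-a)+(-r5))^2 := by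
    rw [← soddy_dsq A O5, h5A]; ring
  have hcBO5 : (B 0 - O5 0)^2 + (B 1 - O5 1)^2 = ((s-b)+(-r5))^2 := by
    rw [← soddy_dsq B O5, h5B]; ring
  have hcCO5 : (C 0 - O5 0)^2 + (C 1 - O5 1)^2 = ((s-c)+(-r5))^2 := by
    rw [← soddy_dsq C O5, h5C]; ring
  have e4 := soddy_descartes (A 0) (A 1) (B 0) (B 1) (C 0) (C 1) (O4 0) (O4 1)
    (s-a) (s-b) (s-c) r4 hcAB hcAC hcAO4 hcBC hcBO4 hcCO4
  have e5 := soddy_descartes (A 0) (A 1) (B 0) (B 1) (C 0) (C 1) (O5 0) (O5 1)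
    (s-a) (s-b) (s-c) (-r5) hcAB hcAC hcAO5 hcBC hcBO5 hcCO5
  have hfac : (r4+r5) * (2*((s-b)*(s-c)+(s-a)*(s-c)+(s-a)*(s-b))*((s-a)*(s-b)*(s-c))*(r4*r5)
      - ((s-a)*(s-b)*(s-c))^2*(r5-r4)) = 0 := by
    linear_combination r5^2 * e4 - r4^2 * e5
  have h2nd : 2*((s-b)*(s-c)+(s-a)*(s-c)+(s-a)*(s-b))*(r4*r5)
      = ((s-a)*(s-b)*(s-c))*(r5-r4) := by
    have hr45 : r4 + r5 ≠ 0 := by positivity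
    have h1 := (mul_eq_zero.1 hfac).resolve_left hr45
    have hP : ((s-a)*(s-b)*(s-c)) ≠ 0 := by positivity
    have h2 : ((s-a)*(s-b)*(s-c)) * (2*((s-b)*(s-c)+(s-a)*(s-c)+(s-a)*(s-b))*(r4*r5)
        - ((s-a)*(s-b)*(s-c))*(r5-r4)) = 0 := by linear_combination h1
    have h3 := (mul_eq_zero.1 h2).resolve_left hP
    linarith
  have hxne := hxpos.ne'
  have hyne := hypos.ne'
  have hzne := hzpos.ne'
  have key3 : 1/(s-a) + 1/(s-b) + 1/(s-c) = 1/2*(1/r4 - 1/r5) := by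
    field_simp
    linear_combination h2nd
  rw [htanA, htanB, htanC]
  calc r/(s-a) + r/(s-b) + r/(s-c) = r*(1/(s-a) + 1/(s-b) + 1/(s-c)) := by ring
    _ = r*(1/2*(1/r4 - 1/r5)) := by rw [key3]
    _ = r/2*(1/r4 - 1/r5) := by ring
end

section
/- Let ABC be a nondegenerate triangle in the Euclidean plane with sidelengths a = dist(B,C), b = dist(C,A), c = dist(A,B), semiperimeter s = (a+b+c)/2, and interior angles A, B, C. Suppose there exists a line L in the plane such that the distance from A to L equals s−a, the distance from B to L equals s−b, the distance from C to L equals s−c, and A, B, C all lie strictly on the same side of L. Then tan(A/2) + tan(B/2) + tan(C/2) = 2. -/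
open Real EuclideanGeometry
open scoped EuclideanGeometry
open scoped RealInnerProductSpace

lemma mem_smul_of_finrank_one' {E : Type*} [NormedAddCommGroup E] [InnerProductSpace ℝ E]
    [FiniteDimensional ℝ E]
    {K : Submodule ℝ E} (hK : Module.finrank ℝ K = 1) {x : E} (hx : x ∈ K) (hx0 : x ≠ 0)
    {y : E} (hy : y ∈ K) : ∃ c : ℝ, y = c • x := by
  have hspan : Submodule.span ℝ {x} = K := by
    apply Submodule.eq_of_le_of_finrank_le (Submodule.span_le.2 (by simpa using hx))
    rw [finrank_span_singleton hx0, hK]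
  rw [← hspan] at hy
  obtain ⟨c, hc⟩ := Submodule.mem_span_singleton.1 hy
  exact ⟨c, hc.symm⟩

lemma exists_line_coords (L : AffineSubspace ℝ (EuclideanSpace ℝ (Fin 2)))
    (hne : (L : Set (EuclideanSpace ℝ (Fin 2))).Nonempty)
    (hdim : Module.finrank ℝ L.direction = 1) :
    ∃ f g : EuclideanSpace ℝ (Fin 2) → ℝ,
      (∀ P Q, dist P Q ^ 2 = (f P - f Q) ^ 2 + (g P - g Q) ^ 2) ∧
      (∀ P, |f P| = Metric.infDist P (L : Set (EuclideanSpace ℝ (Fin 2)))) ∧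
      (∀ X Y : EuclideanSpace ℝ (Fin 2), L.SSameSide X Y → 0 < f X * f Y) := by
  obtain ⟨p0, hp0⟩ := hne
  have hfin : Module.finrank ℝ (EuclideanSpace ℝ (Fin 2)) = 2 := finrank_euclideanSpace_fin
  have horthdim : Module.finrank ℝ L.directionᗮ = 1 := by
    have h := Submodule.finrank_add_finrank_orthogonal (K := L.direction)
    rw [hdim, hfin] at h
    omega
  -- unit normal
  obtain ⟨n, hnK, hn1⟩ : ∃ n ∈ L.directionᗮ, ‖n‖ = 1 := by
    obtain ⟨n0, hn0K, hn0⟩ := Submodule.exists_mem_ne_zero_of_ne_bot (p := L.directionᗮ)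
      (by intro h; rw [h] at horthdim; simp at horthdim)
    exact ⟨(‖n0‖⁻¹ : ℝ) • n0, Submodule.smul_mem _ _ hn0K, norm_smul_inv_norm hn0⟩
  have hnne : n ≠ 0 := by intro h; rw [h, norm_zero] at hn1; norm_num at hn1
  have hnn : ⟪n, n⟫ = 1 := by rw [real_inner_self_eq_norm_sq, hn1]; norm_num
  -- unit tangent
  obtain ⟨t, htK, ht1⟩ : ∃ t ∈ L.direction, ‖t‖ = 1 := by
    obtain ⟨t0, ht0K, ht0⟩ := Submodule.exists_mem_ne_zero_of_ne_bot (p := L.direction)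
      (by intro h; rw [h] at hdim; simp at hdim)
    exact ⟨(‖t0‖⁻¹ : ℝ) • t0, Submodule.smul_mem _ _ ht0K, norm_smul_inv_norm ht0⟩
  have htne : t ≠ 0 := by intro h; rw [h, norm_zero] at ht1; norm_num at ht1
  have htt : ⟪t, t⟫ = 1 := by rw [real_inner_self_eq_norm_sq, ht1]; norm_num
  have htn : ⟪t, n⟫ = 0 := (Submodule.mem_orthogonal _ _).1 hnK t htK
  have hnt : ⟪n, t⟫ = 0 := by rw [real_inner_comm]; exact htn
  -- membership criterion for direction
  have hdir_mem : ∀ v : EuclideanSpace ℝ (Fin 2), ⟪n, v⟫ = 0 → v ∈ L.direction := by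
    intro v hv
    rw [← Submodule.orthogonal_orthogonal L.direction, Submodule.mem_orthogonal]
    intro z hz
    obtain ⟨c, rfl⟩ := mem_smul_of_finrank_one' horthdim hnK hnne hz
    rw [real_inner_smul_left, hv, mul_zero]
  obtain ⟨f, hf⟩ : ∃ f : EuclideanSpace ℝ (Fin 2) → ℝ, ∀ P, f P = ⟪n, P -ᵥ p0⟫ :=
    ⟨_, fun _ => rfl⟩
  obtain ⟨g, hg⟩ : ∃ g : EuclideanSpace ℝ (Fin 2) → ℝ, ∀ P, g P = ⟪t, P -ᵥ p0⟫ :=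
    ⟨_, fun _ => rfl⟩
  have hfz : ∀ z ∈ L, f z = 0 := fun z hz => (hf z).trans
    ((Submodule.mem_orthogonal' _ _).1 hnK _ (AffineSubspace.vsub_mem_direction hz hp0))
  -- decomposition of an arbitrary vector
  have hdecomp : ∀ v : EuclideanSpace ℝ (Fin 2), v = ⟪n, v⟫ • n + ⟪t, v⟫ • t := by
    intro v
    have hw : v - ⟪n, v⟫ • n ∈ L.direction := by
      apply hdir_mem
      rw [inner_sub_right, real_inner_smul_right, hnn]
      ring
    obtain ⟨c, hc⟩ := mem_smul_of_finrank_one' hdim htK htne hw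
    have hcval : c = ⟪t, v⟫ := by
      have h1 : ⟪t, v - ⟪n, v⟫ • n⟫ = c * ⟪t, t⟫ := by rw [hc, real_inner_smul_right]
      rw [inner_sub_right, real_inner_smul_right, htn, htt] at h1
      linarith
    rw [hcval, sub_eq_iff_eq_add] at hc
    exact hc.trans (add_comm _ _)
  -- base-point independence
  have hbase : ∀ (w pz : EuclideanSpace ℝ (Fin 2)), pz ∈ L → ⟪n, w -ᵥ pz⟫ = f w := by
    intro w pz hpz
    have h1 : f w - f pz = ⟪n, w -ᵥ pz⟫ := by
      rw [hf, hf, ← inner_sub_right, vsub_sub_vsub_cancel_right]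
    rw [hfz pz hpz] at h1
    linarith
  -- distance formula
  have hdist : ∀ P Q, dist P Q ^ 2 = (f P - f Q) ^ 2 + (g P - g Q) ^ 2 := by
    intro P Q
    have hfv : f P - f Q = ⟪n, P -ᵥ Q⟫ := by
      rw [hf, hf, ← inner_sub_right, vsub_sub_vsub_cancel_right]
    have hgv : g P - g Q = ⟪t, P -ᵥ Q⟫ := by
      rw [hg, hg, ← inner_sub_right, vsub_sub_vsub_cancel_right]
    rw [hfv, hgv, dist_eq_norm_vsub (EuclideanSpace ℝ (Fin 2)), ← real_inner_self_eq_norm_sq]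
    conv_lhs => rw [hdecomp (P -ᵥ Q)]
    simp only [inner_add_add_self, real_inner_smul_left, real_inner_smul_right, hnn, htt, hnt,
      htn]
    ring
  -- distance to the line
  have habs : ∀ P, |f P| = Metric.infDist P (L : Set (EuclideanSpace ℝ (Fin 2))) := by
    intro P
    have hLclosed : IsClosed (L : Set (EuclideanSpace ℝ (Fin 2))) := L.closed_of_finiteDimensional
    refine le_antisymm ?_ ?_
    · obtain ⟨z, hz, hzd⟩ := hLclosed.exists_infDist_eq_dist ⟨p0, hp0⟩ P
      rw [hzd, ← hbase P z hz]
      calc |⟪n, P -ᵥ z⟫| ≤ ‖n‖ * ‖P -ᵥ z‖ := abs_real_inner_le_norm n (P -ᵥ z)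
        _ = dist P z := by rw [hn1, one_mul, dist_eq_norm_vsub (EuclideanSpace ℝ (Fin 2))]
    · have hzL : (-(f P)) • n +ᵥ P ∈ L := by
        rw [← AffineSubspace.vsub_right_mem_direction_iff_mem hp0]
        apply hdir_mem
        have h2 : ((-(f P)) • n +ᵥ P) -ᵥ p0 = (P -ᵥ p0) - f P • n := by
          rw [vadd_vsub_assoc]
          module
        rw [h2, inner_sub_right, real_inner_smul_right, hnn, hf]
        ring
      calc Metric.infDist P (L : Set (EuclideanSpace ℝ (Fin 2)))
            ≤ dist P ((-(f P)) • n +ᵥ P) := Metric.infDist_le_dist_of_mem hzL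
        _ = |f P| := by
            rw [dist_eq_norm_vsub (EuclideanSpace ℝ (Fin 2))]
            have h3 : P -ᵥ ((-(f P)) • n +ᵥ P) = f P • n := by
              rw [vsub_vadd_eq_vsub_sub, vsub_self, zero_sub, neg_smul, neg_neg]
            rw [h3, norm_smul, hn1, mul_one, Real.norm_eq_abs]
  refine ⟨f, g, hdist, habs, ?_⟩
  -- same side
  intro X Y hside
  obtain ⟨⟨p₁, hp₁, p₂, hp₂, hray⟩, hX, hY⟩ := hside
  have hLclosed : IsClosed (L : Set (EuclideanSpace ℝ (Fin 2))) := L.closed_of_finiteDimensional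
  have hfX : f X ≠ 0 := by
    intro h
    have h4 := habs X
    rw [h, abs_zero] at h4
    exact hX ((hLclosed.mem_iff_infDist_zero ⟨p0, hp0⟩).2 h4.symm)
  have hfY : f Y ≠ 0 := by
    intro h
    have h4 := habs Y
    rw [h, abs_zero] at h4
    exact hY ((hLclosed.mem_iff_infDist_zero ⟨p0, hp0⟩).2 h4.symm)
  rcases hray with h | h | ⟨r1, r2, hr1, hr2, hr⟩
  · rw [vsub_eq_zero_iff_eq] at h
    exact absurd (h ▸ hp₁) hX
  · rw [vsub_eq_zero_iff_eq] at h
    exact absurd (h ▸ hp₂) hY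
  · have hrel : r1 * f X = r2 * f Y := by
      have h7 := congrArg (fun w => ⟪n, w⟫) hr
      simp only [real_inner_smul_right] at h7
      rw [hbase X p₁ hp₁, hbase Y p₂ hp₂] at h7
      exact h7
    have h5 : 0 < r1 * (f X * f Y) := by
      have h6 : r1 * (f X * f Y) = r2 * (f Y * f Y) := by linear_combination (f Y) * hrel
      rw [h6]
      exact mul_pos hr2 (mul_self_pos.2 hfY)
    nlinarith

lemma tan_half_eq' {x : ℝ} (h0 : 0 ≤ x) (hx : x < π) :
    Real.tan (x / 2) = Real.sin x / (1 + Real.cos x) := by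
  have hc : 0 < Real.cos (x / 2) :=
    Real.cos_pos_of_mem_Ioo ⟨by have := Real.pi_pos; linarith, by linarith⟩
  have hs : Real.sin x = 2 * Real.sin (x / 2) * Real.cos (x / 2) := by
    have := Real.sin_two_mul (x / 2)
    rw [show 2 * (x / 2) = x by ring] at this
    linarith
  have hc2 : 1 + Real.cos x = 2 * Real.cos (x / 2) ^ 2 := by
    have := Real.cos_two_mul (x / 2)
    rw [show 2 * (x / 2) = x by ring] at this
    linarith
  rw [Real.tan_eq_sin_div_cos, hs, hc2]
  field_simp

lemma tan_half_angle' (X Y Z : EuclideanSpace ℝ (Fin 2)) (x y z : ℝ)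
    (hx : x = dist Y Z) (hy : y = dist Z X) (hz : z = dist X Y)
    (h1 : 0 < y + z - x) (h2 : 0 < z + x - y) (h3 : 0 < x + y - z) :
    Real.tan (∠ Y X Z / 2)
      = Real.sqrt ((x + y + z) * (y + z - x) * ((z + x - y) * (x + y - z)))
        / ((x + y + z) * (y + z - x)) := by
  have hy0 : 0 < y := by linarith
  have hz0 : 0 < z := by linarith
  have hxyz : 0 < x + y + z := by linarith
  have hlc := EuclideanGeometry.law_cos Y X Z
  rw [← hx, dist_comm Y X, ← hz, ← hy] at hlc
  have hA : 2 * (y * z) * Real.cos (∠ Y X Z) = y ^ 2 + z ^ 2 - x ^ 2 := by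
    linear_combination hlc
  have hP0 : 0 ≤ (x + y + z) * (y + z - x) * ((z + x - y) * (x + y - z)) := by positivity
  have h1p : 1 + Real.cos (∠ Y X Z) = ((x + y + z) * (y + z - x)) / (2 * (y * z)) := by
    rw [eq_div_iff (by positivity)]
    linear_combination hA
  have hsin : Real.sin (∠ Y X Z)
      = Real.sqrt ((x + y + z) * (y + z - x) * ((z + x - y) * (x + y - z))) / (2 * (y * z)) := by
    rw [Real.sin_eq_sqrt_one_sub_cos_sq (angle_nonneg _ _ _) (angle_le_pi _ _ _)]
    have h4 : 1 - Real.cos (∠ Y X Z) ^ 2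
        = ((x + y + z) * (y + z - x) * ((z + x - y) * (x + y - z))) / (2 * (y * z)) ^ 2 := by
      rw [eq_div_iff (by positivity)]
      linear_combination (-(2 * (y * z) * Real.cos (∠ Y X Z) + y ^ 2 + z ^ 2 - x ^ 2)) * hA
    rw [h4, Real.sqrt_div hP0, Real.sqrt_sq (by positivity)]
  have hlt : ∠ Y X Z < π := by
    rcases lt_or_eq_of_le (angle_le_pi Y X Z) with h | h
    · exact h
    · exfalso
      have h5 := h1p
      rw [h, Real.cos_pi] at h5
      have h6 : 0 < ((x + y + z) * (y + z - x)) / (2 * (y * z)) := by positivity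
      linarith
  rw [tan_half_eq' (angle_nonneg _ _ _) hlt, hsin, h1p]
  have hne1 : (x + y + z) * (y + z - x) ≠ 0 := by positivity
  have hne2 : (2:ℝ) * (y * z) ≠ 0 := by positivity
  field_simp

lemma final_sum' (u v w : ℝ) (hu : 0 < u) (hv : 0 < v) (hw : 0 < w)
    (hprod : (u+v+w)*(u*v*w) = ((u*v+v*w+u*w)/2)^2) :
    2*(u*v+v*w+u*w)/(2*(u+v+w)*(2*u)) + 2*(u*v+v*w+u*w)/(2*(u+v+w)*(2*v))
      + 2*(u*v+v*w+u*w)/(2*(u+v+w)*(2*w)) = 2 := by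
  have h1 : (u+v+w) ≠ 0 := by positivity
  have h2 : u ≠ 0 := ne_of_gt hu
  have h3 : v ≠ 0 := ne_of_gt hv
  have h4 : w ≠ 0 := ne_of_gt hw
  field_simp
  linear_combination (-4) * hprod

theorem sum_half_angle_tangents_eq_two_of_tangent_line
    (A B C : EuclideanSpace ℝ (Fin 2))
    (hABC : AffineIndependent ℝ ![A, B, C])
    (a b c s : ℝ)
    (ha : a = dist B C) (hb : b = dist C A) (hc : c = dist A B)
    (hs : s = (a + b + c) / 2)
    (L : AffineSubspace ℝ (EuclideanSpace ℝ (Fin 2)))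
    (hLne : (L : Set (EuclideanSpace ℝ (Fin 2))).Nonempty)
    (hLdim : Module.finrank ℝ L.direction = 1)
    (hdA : Metric.infDist A (L : Set (EuclideanSpace ℝ (Fin 2))) = s - a)
    (hdB : Metric.infDist B (L : Set (EuclideanSpace ℝ (Fin 2))) = s - b)
    (hdC : Metric.infDist C (L : Set (EuclideanSpace ℝ (Fin 2))) = s - c)
    (hsideAB : L.SSameSide A B) (hsideAC : L.SSameSide A C) :
    Real.tan (∠ B A C / 2) + Real.tan (∠ A B C / 2) + Real.tan (∠ B C A / 2) = 2 := by
  have hLclosed : IsClosed (L : Set (EuclideanSpace ℝ (Fin 2))) := L.closed_of_finiteDimensional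
  have hposA : 0 < s - a := by
    rw [← hdA]; exact (hLclosed.notMem_iff_infDist_pos hLne).1 hsideAB.2.1
  have hposB : 0 < s - b := by
    rw [← hdB]; exact (hLclosed.notMem_iff_infDist_pos hLne).1 hsideAB.2.2
  have hposC : 0 < s - c := by
    rw [← hdC]; exact (hLclosed.notMem_iff_infDist_pos hLne).1 hsideAC.2.2
  obtain ⟨u, hu⟩ : ∃ u : ℝ, s - a = u := ⟨_, rfl⟩
  obtain ⟨v, hv⟩ : ∃ v : ℝ, s - b = v := ⟨_, rfl⟩
  obtain ⟨w, hw⟩ : ∃ w : ℝ, s - c = w := ⟨_, rfl⟩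
  have hu0 : 0 < u := hu ▸ hposA
  have hv0 : 0 < v := hv ▸ hposB
  have hw0 : 0 < w := hw ▸ hposC
  have ha' : a = v + w := by linarith
  have hb' : b = u + w := by linarith
  have hc' : c = u + v := by linarith
  subst ha' hb' hc'
  have hs' : s = u + v + w := by linarith
  subst hs'
  have hdA' : Metric.infDist A (L : Set (EuclideanSpace ℝ (Fin 2))) = u := by rw [hdA]; ring
  have hdB' : Metric.infDist B (L : Set (EuclideanSpace ℝ (Fin 2))) = v := by rw [hdB]; ring
  have hdC' : Metric.infDist C (L : Set (EuclideanSpace ℝ (Fin 2))) = w := by rw [hdC]; ring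
  obtain ⟨f, g, hdist, habs, hsign⟩ := exists_line_coords L hLne hLdim
  have hfA2 : f A ^ 2 = u ^ 2 := by
    rw [← sq_abs, habs A, hdA']
  have hfB2 : f B ^ 2 = v ^ 2 := by
    rw [← sq_abs, habs B, hdB']
  have hfC2 : f C ^ 2 = w ^ 2 := by
    rw [← sq_abs, habs C, hdC']
  have hAB : f A * f B = u * v := by
    have h0 := hsign A B hsideAB
    have h1 : |f A * f B| = u * v := by rw [abs_mul, habs A, habs B, hdA', hdB']
    rw [abs_of_pos h0] at h1; exact h1
  have hAC : f A * f C = u * w := by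
    have h0 := hsign A C hsideAC
    have h1 : |f A * f C| = u * w := by rw [abs_mul, habs A, habs C, hdA', hdC']
    rw [abs_of_pos h0] at h1; exact h1
  have hfA2ne : f A ^ 2 ≠ 0 := by rw [hfA2]; positivity
  have hBC : f B * f C = v * w := by
    refine mul_left_cancel₀ hfA2ne ?_
    calc f A ^ 2 * (f B * f C) = (f A * f B) * (f A * f C) := by ring
      _ = (u * v) * (u * w) := by rw [hAB, hAC]
      _ = f A ^ 2 * (v * w) := by rw [hfA2]; ring
  have hABd : (f A - f B) ^ 2 = (u - v) ^ 2 := by linear_combination hfA2 + hfB2 - 2 * hAB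
  have hACd : (f A - f C) ^ 2 = (u - w) ^ 2 := by linear_combination hfA2 + hfC2 - 2 * hAC
  have hBCd : (f B - f C) ^ 2 = (v - w) ^ 2 := by linear_combination hfB2 + hfC2 - 2 * hBC
  -- tangential differences
  have hp2 : (g A - g B) ^ 2 = 4 * (u * v) := by
    have h5 := hdist A B
    rw [← hc] at h5
    linear_combination -h5 - hABd
  have hq2 : (g B - g C) ^ 2 = 4 * (v * w) := by
    have h5 := hdist B C
    rw [← ha] at h5
    linear_combination -h5 - hBCd
  have hr2 : (g A - g C) ^ 2 = 4 * (u * w) := by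
    have h5 := hdist A C
    rw [dist_comm A C, ← hb] at h5
    linear_combination -h5 - hACd
  have hX : u * v = (g A - g B) ^ 2 / 4 := by linarith
  have hY : v * w = (g B - g C) ^ 2 / 4 := by linarith
  have hZ : u * w = ((g A - g B) + (g B - g C)) ^ 2 / 4 := by
    have h6 : (g A - g B) + (g B - g C) = g A - g C := by ring
    rw [h6]; linarith
  have hprod : (u + v + w) * (u * v * w) = ((u * v + v * w + u * w) / 2) ^ 2 := by
    calc (u + v + w) * (u * v * w)
        = (u * v) * (v * w) + (v * w) * (u * w) + (u * v) * (u * w) := by ring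
      _ = ((g A - g B) ^ 2 / 4) * ((g B - g C) ^ 2 / 4)
          + ((g B - g C) ^ 2 / 4) * (((g A - g B) + (g B - g C)) ^ 2 / 4)
          + ((g A - g B) ^ 2 / 4) * (((g A - g B) + (g B - g C)) ^ 2 / 4) := by
            rw [← hX, ← hY, ← hZ]
      _ = (((g A - g B) ^ 2 / 4 + (g B - g C) ^ 2 / 4
          + ((g A - g B) + (g B - g C)) ^ 2 / 4) / 2) ^ 2 := by ring
      _ = ((u * v + v * w + u * w) / 2) ^ 2 := by rw [← hX, ← hY, ← hZ]
  -- the three angles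
  have e1 := tan_half_angle' A B C (v + w) (u + w) (u + v) ha hb hc
    (by linarith) (by linarith) (by linarith)
  have e2 := tan_half_angle' B A C (u + w) (v + w) (u + v)
    (hb.trans (dist_comm C A)) (ha.trans (dist_comm B C)) (hc.trans (dist_comm A B))
    (by linarith) (by linarith) (by linarith)
  have e3 := tan_half_angle' C B A (u + v) (u + w) (v + w)
    (hc.trans (dist_comm A B)) (hb.trans (dist_comm C A)) (ha.trans (dist_comm B C))
    (by linarith) (by linarith) (by linarith)
  have E1 : Real.tan (∠ B A C / 2) = 2 * (u * v + v * w + u * w) / (2 * (u + v + w) * (2 * u)) := by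
    rw [e1, show (v + w + (u + w) + (u + v)) * (u + w + (u + v) - (v + w))
        * ((u + v + (v + w) - (u + w)) * (v + w + (u + w) - (u + v)))
        = (2 * (u * v + v * w + u * w)) ^ 2 from by linear_combination 16 * hprod,
      Real.sqrt_sq (by positivity),
      show (v + w + (u + w) + (u + v)) * (u + w + (u + v) - (v + w))
        = 2 * (u + v + w) * (2 * u) from by ring]
  have E2 : Real.tan (∠ A B C / 2) = 2 * (u * v + v * w + u * w) / (2 * (u + v + w) * (2 * v)) := by
    rw [e2, show (u + w + (v + w) + (u + v)) * (v + w + (u + v) - (u + w))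
        * ((u + v + (u + w) - (v + w)) * (u + w + (v + w) - (u + v)))
        = (2 * (u * v + v * w + u * w)) ^ 2 from by linear_combination 16 * hprod,
      Real.sqrt_sq (by positivity),
      show (u + w + (v + w) + (u + v)) * (v + w + (u + v) - (u + w))
        = 2 * (u + v + w) * (2 * v) from by ring]
  have E3 : Real.tan (∠ B C A / 2) = 2 * (u * v + v * w + u * w) / (2 * (u + v + w) * (2 * w)) := by
    rw [e3, show (u + v + (u + w) + (v + w)) * (u + w + (v + w) - (u + v))
        * ((v + w + (u + v) - (u + w)) * (u + v + (u + w) - (v + w)))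
        = (2 * (u * v + v * w + u * w)) ^ 2 from by linear_combination 16 * hprod,
      Real.sqrt_sq (by positivity),
      show (u + v + (u + w) + (v + w)) * (u + w + (v + w) - (u + v))
        = 2 * (u + v + w) * (2 * w) from by ring]
  rw [E1, E2, E3]
  exact final_sum' u v w hu0 hv0 hw0 hprod
end

section
/- Let a, b, c be pairwise distinct real numbers and consider the triangle in ℝ² with vertices (a, a²), (b, b²), (c, c²) (these three points are affinely independent). Then the orthocenter of this triangle has second coordinate (ordinate) equal to −(1 + ab + ac + bc). -/
open Affine

theorem parabola_triangle_orthocenter_ordinate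
    (a b c : ℝ) (hab : a ≠ b) (hac : a ≠ c) (hbc : b ≠ c)
    (hind : AffineIndependent ℝ
      ![(!₂[a, a ^ 2] : EuclideanSpace ℝ (Fin 2)), !₂[b, b ^ 2], !₂[c, c ^ 2]]) :
    Affine.Triangle.orthocenter
      (⟨![(!₂[a, a ^ 2] : EuclideanSpace ℝ (Fin 2)), !₂[b, b ^ 2], !₂[c, c ^ 2]], hind⟩ :
        Affine.Triangle ℝ (EuclideanSpace ℝ (Fin 2))) 1 =
      -(1 + a * b + a * c + b * c) := by
  set t : Affine.Triangle ℝ (EuclideanSpace ℝ (Fin 2)) :=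
    ⟨![(!₂[a, a ^ 2] : EuclideanSpace ℝ (Fin 2)), !₂[b, b ^ 2], !₂[c, c ^ 2]], hind⟩ with ht
  set H : EuclideanSpace ℝ (Fin 2) :=
    !₂[a + (1 + (a + b) * (a + c)) * (b + c), -(1 + a * b + a * c + b * c)] with hH
  have htop : affineSpan ℝ (Set.range t.points) = ⊤ := by
    rw [hind.affineSpan_eq_top_iff_card_eq_finrank_add_one]
    simp [finrank_euclideanSpace_fin]
  have hmem : ∀ i : Fin 3, ∀ j k : Fin 3,
      (Finset.univ.erase i : Finset (Fin 3)) = {j, k} →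
      inner ℝ (t.points j -ᵥ t.points k) (H -ᵥ t.points i) = (0 : ℝ) →
      H ∈ t.altitude i := by
    intro i j k herase hinner
    rw [Simplex.altitude_def]
    refine ⟨?_, htop ▸ AffineSubspace.mem_top _ _ _⟩
    rw [AffineSubspace.mem_coe, AffineSubspace.mem_mk', direction_affineSpan,
      (by rw [← herase]; ext x; simp : ({i}ᶜ : Set (Fin 3)) = ↑({j, k} : Finset (Fin 3)))]
    have himg : t.points '' ↑({j, k} : Finset (Fin 3)) = {t.points j, t.points k} := by
      simp [Set.image_insert_eq]
    rw [himg, vectorSpan_pair, Submodule.mem_orthogonal_singleton_iff_inner_right]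
    exact hinner
  have h0 : H ∈ t.altitude 0 := by
    refine hmem 0 1 2 (by decide) ?_
    simp only [ht, hH, EuclideanSpace.inner_eq_star_dotProduct]
    simp [dotProduct, Fin.sum_univ_two, PiLp.sub_apply]
    ring
  have h1 : H ∈ t.altitude 1 := by
    refine hmem 1 0 2 (by decide) ?_
    simp only [ht, hH, EuclideanSpace.inner_eq_star_dotProduct]
    simp [dotProduct, Fin.sum_univ_two, PiLp.sub_apply]
    ring
  have horth : H = t.orthocenter :=
    Affine.Triangle.eq_orthocenter_of_forall_mem_altitude (by decide) h0 h1
  rw [← horth]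
  simp [hH]
end

section
/- Let r > 0 and let a, b, c be pairwise distinct real numbers. Consider the triangle in ℝ² with vertices (a, a²), (b, b²), (c, c²), inscribed in the parabola y = x². Suppose the circle with center (0, r² + r) and radius r is the incircle of this triangle, i.e. the distance from (0, r² + r) to each of the three sidelines equals r and the point (0, r² + r) lies in the interior of the triangle. Then the orthocenter of the triangle has second coordinate (ordinate) equal to r² + 2r − 1. -/
set_option maxHeartbeats 1000000

open Affine

private lemma dist_sq_eq' (X Y : EuclideanSpace ℝ (Fin 2)) :
    dist X Y ^ 2 = (X 0 - Y 0) ^ 2 + (X 1 - Y 1) ^ 2 := by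
  rw [EuclideanSpace.dist_eq, Real.sq_sqrt (by positivity)]
  simp [Fin.sum_univ_two, Real.dist_eq, sq_abs]

private lemma tangent_condition (k r p q : ℝ) (hpq : p ≠ q)
    (Pp Qq I : EuclideanSpace ℝ (Fin 2))
    (hPp : Pp = ![p, p ^ 2]) (hQq : Qq = ![q, q ^ 2]) (hI : I = ![0, k])
    (h : Metric.infDist I (affineSpan ℝ {Pp, Qq} : Set (EuclideanSpace ℝ (Fin 2))) = r) :
    (k + p * q) ^ 2 = r ^ 2 * (1 + (p + q) ^ 2) := by
  have hqp : q - p ≠ 0 := sub_ne_zero.2 (Ne.symm hpq)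
  have hr0 : 0 ≤ r := by rw [← h]; exact Metric.infDist_nonneg
  have hD : (0 : ℝ) < 1 + (p + q) ^ 2 := by positivity
  have dist_sq : ∀ t : ℝ, dist I (t • (Qq -ᵥ Pp) +ᵥ Pp) ^ 2
      = (t * (q - p) + p) ^ 2 + (t * (q ^ 2 - p ^ 2) + p ^ 2 - k) ^ 2 := by
    intro t
    rw [dist_sq_eq']
    have h0 : (t • (Qq -ᵥ Pp) +ᵥ Pp) 0 = t * (q - p) + p := by
      simp [hPp, hQq, vsub_eq_sub, vadd_eq_add]
    have h1 : (t • (Qq -ᵥ Pp) +ᵥ Pp) 1 = t * (q ^ 2 - p ^ 2) + p ^ 2 := by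
      simp [hPp, hQq, vsub_eq_sub, vadd_eq_add]
    rw [h0, h1, hI]
    simp
    ring
  set N : ℝ := (k + p * q) ^ 2 with hN
  set D : ℝ := 1 + (p + q) ^ 2 with hDdef
  have low : r ^ 2 * D ≤ N := by
    set t0 : ℝ := (-p + (p + q) * (k - p ^ 2)) / (D * (q - p)) with ht0
    have hm : t0 • (Qq -ᵥ Pp) +ᵥ Pp ∈
        (affineSpan ℝ ({Pp, Qq} : Set (EuclideanSpace ℝ (Fin 2))) :
          Set (EuclideanSpace ℝ (Fin 2))) :=
      vadd_left_mem_affineSpan_pair.2 ⟨t0, rfl⟩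
    have hle : r ≤ dist I (t0 • (Qq -ᵥ Pp) +ᵥ Pp) := by
      have h2 := Metric.infDist_le_dist_of_mem (x := I) hm
      exact h.symm.trans_le h2
    have hsq : r ^ 2 ≤ dist I (t0 • (Qq -ᵥ Pp) +ᵥ Pp) ^ 2 := by
      have := pow_le_pow_left₀ hr0 hle 2
      linarith
    rw [dist_sq t0] at hsq
    have hval : (t0 * (q - p) + p) ^ 2 + (t0 * (q ^ 2 - p ^ 2) + p ^ 2 - k) ^ 2 = N / D := by
      rw [ht0, hN, hDdef]
      field_simp
      ring
    rw [hval] at hsq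
    calc r ^ 2 * D ≤ (N / D) * D := by nlinarith
      _ = N := by field_simp
  have high : N ≤ r ^ 2 * D := by
    have hND : 0 ≤ N / D := by positivity
    have hne : (↑(affineSpan ℝ ({Pp, Qq} : Set (EuclideanSpace ℝ (Fin 2)))) :
        Set (EuclideanSpace ℝ (Fin 2))).Nonempty :=
      ⟨Pp, left_mem_affineSpan_pair ℝ Pp Qq⟩
    have hs : Real.sqrt (N / D) ≤ r := by
      have key : Real.sqrt (N / D) ≤ Metric.infDist I
          (↑(affineSpan ℝ ({Pp, Qq} : Set (EuclideanSpace ℝ (Fin 2)))) :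
            Set (EuclideanSpace ℝ (Fin 2))) := by
        by_contra hcon
        push_neg at hcon
        obtain ⟨X, hX, hXd⟩ := (Metric.infDist_lt_iff hne).1 hcon
        have hd := AffineSubspace.vsub_mem_direction hX (left_mem_affineSpan_pair ℝ Pp Qq)
        rw [direction_affineSpan, mem_vectorSpan_pair_rev] at hd
        obtain ⟨t, ht⟩ := hd
        have hXeq : X = t • (Qq -ᵥ Pp) +ᵥ Pp := by
          rw [eq_vadd_iff_vsub_eq, ← ht]
        have hge : N / D ≤ dist I X ^ 2 := by
          rw [hXeq, dist_sq t, div_le_iff₀ hD]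
          have hid : ((t * (q - p) + p) ^ 2 + (t * (q ^ 2 - p ^ 2) + p ^ 2 - k) ^ 2) * D
              = N + ((t * (q - p)) * D - (-p + (p + q) * (k - p ^ 2))) ^ 2 := by
            rw [hN, hDdef]; ring
          have hsq2 := sq_nonneg ((t * (q - p)) * D - (-p + (p + q) * (k - p ^ 2)))
          linarith
        have : Real.sqrt (N / D) ≤ dist I X := by
          calc Real.sqrt (N / D) ≤ Real.sqrt (dist I X ^ 2) := Real.sqrt_le_sqrt hge
            _ = dist I X := Real.sqrt_sq dist_nonneg
        linarith
      exact key.trans h.le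
    have := pow_le_pow_left₀ (Real.sqrt_nonneg _) hs 2
    rw [Real.sq_sqrt hND] at this
    calc N = (N / D) * D := by field_simp
      _ ≤ r ^ 2 * D := by nlinarith
  linarith

private lemma orthocenter_coord (a b c : ℝ)
    (A B C : EuclideanSpace ℝ (Fin 2))
    (hA : A = ![a, a ^ 2]) (hB : B = ![b, b ^ 2]) (hC : C = ![c, c ^ 2])
    (hind : AffineIndependent ℝ ![A, B, C]) :
    Affine.Triangle.orthocenter
      (⟨![A, B, C], hind⟩ : Affine.Triangle ℝ (EuclideanSpace ℝ (Fin 2))) 1 =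
      -(a * b + b * c + c * a) - 1 := by
  set T : Affine.Triangle ℝ (EuclideanSpace ℝ (Fin 2)) := ⟨![A, B, C], hind⟩ with hT
  set H : EuclideanSpace ℝ (Fin 2) :=
    WithLp.toLp 2 ![(a + b) * (b + c) * (c + a) + a + b + c, -(a * b + b * c + c * a) - 1] with hH
  have hspan_top : affineSpan ℝ (Set.range T.points) = ⊤ := by
    rw [hind.affineSpan_eq_top_iff_card_eq_finrank_add_one]
    simp [finrank_euclideanSpace_fin]
  have hmem : ∀ i : Fin 3, (P Q R : EuclideanSpace ℝ (Fin 2)) →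
      T.points '' ↑(Finset.univ.erase i) = {P, Q} →
      T.points i = R → ((inner ℝ (P -ᵥ Q) (H -ᵥ R) : ℝ) = 0) → H ∈ T.altitude i := by
    intro i P Q R himg hR hinner
    rw [Simplex.altitude_def]
    refine ⟨?_, hspan_top ▸ AffineSubspace.mem_top ℝ _ H⟩
    rw [show ({i}ᶜ : Set (Fin 3)) = ↑(Finset.univ.erase i) by ext; simp]
    rw [AffineSubspace.mem_coe, AffineSubspace.mem_mk', himg, hR,
      direction_affineSpan, vectorSpan_pair]
    exact (Submodule.mem_orthogonal_singleton_iff_inner_right).2 hinner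
  have himg0 : T.points '' ↑(Finset.univ.erase (0 : Fin 3)) = {B, C} := by
    have : (↑(Finset.univ.erase (0 : Fin 3)) : Set (Fin 3)) = {1, 2} := by
      ext i; fin_cases i <;> simp
    rw [this, Set.image_insert_eq, Set.image_singleton]
    simp [hT]
  have himg1 : T.points '' ↑(Finset.univ.erase (1 : Fin 3)) = {A, C} := by
    have : (↑(Finset.univ.erase (1 : Fin 3)) : Set (Fin 3)) = {0, 2} := by
      ext i; fin_cases i <;> simp
    rw [this, Set.image_insert_eq, Set.image_singleton]
    simp [hT]
  have hin0 : (inner ℝ (B -ᵥ C) (H -ᵥ A) : ℝ) = 0 := by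
    rw [hH]
    simp [PiLp.inner_apply, RCLike.inner_apply, Fin.sum_univ_two, vsub_eq_sub, hA, hB, hC]
    ring
  have hin1 : (inner ℝ (A -ᵥ C) (H -ᵥ B) : ℝ) = 0 := by
    rw [hH]
    simp [PiLp.inner_apply, RCLike.inner_apply, Fin.sum_univ_two, vsub_eq_sub, hA, hB, hC]
    ring
  have h0 : H ∈ T.altitude 0 := hmem 0 B C A himg0 rfl hin0
  have h1 : H ∈ T.altitude 1 := hmem 1 A C B himg1 rfl hin1
  have hHo : H = T.orthocenter :=
    Triangle.eq_orthocenter_of_forall_mem_altitude (i₁ := 0) (i₂ := 1) (by decide) h0 h1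
  rw [← hHo, hH]
  simp

theorem parabola_incircle_orthocenter_ordinate
    (r : ℝ) (hr : 0 < r)
    (a b c : ℝ) (hab : a ≠ b) (hac : a ≠ c) (hbc : b ≠ c)
    (A B C I : EuclideanSpace ℝ (Fin 2))
    (hA : A = ![a, a ^ 2]) (hB : B = ![b, b ^ 2]) (hC : C = ![c, c ^ 2])
    (hI : I = ![0, r ^ 2 + r])
    (hind : AffineIndependent ℝ ![A, B, C])
    (hdAB : Metric.infDist I (affineSpan ℝ {A, B} : Set (EuclideanSpace ℝ (Fin 2))) = r)
    (hdBC : Metric.infDist I (affineSpan ℝ {B, C} : Set (EuclideanSpace ℝ (Fin 2))) = r)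
    (hdCA : Metric.infDist I (affineSpan ℝ {C, A} : Set (EuclideanSpace ℝ (Fin 2))) = r)
    (hint : I ∈ interior (convexHull ℝ ({A, B, C} : Set (EuclideanSpace ℝ (Fin 2))))) :
    Affine.Triangle.orthocenter
      (⟨![A, B, C], hind⟩ : Affine.Triangle ℝ (EuclideanSpace ℝ (Fin 2))) 1 =
      r ^ 2 + 2 * r - 1 := by
  have eAB := tangent_condition (r ^ 2 + r) r a b hab A B I hA hB hI hdAB
  have eBC := tangent_condition (r ^ 2 + r) r b c hbc B C I hB hC hI hdBC
  have eCA := tangent_condition (r ^ 2 + r) r c a (Ne.symm hac) C A I hC hA hI hdCA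
  have h1 : (b - c) * ((b + c) * (a ^ 2 - r ^ 2) + 2 * a * r) = 0 := by
    linear_combination eAB - eCA
  have h2 : (a - c) * ((a + c) * (b ^ 2 - r ^ 2) + 2 * b * r) = 0 := by
    linear_combination eAB - eBC
  have ha' : (b + c) * (a ^ 2 - r ^ 2) + 2 * a * r = 0 := by
    rcases mul_eq_zero.1 h1 with h | h
    · exact absurd (sub_eq_zero.1 h) hbc
    · exact h
  have hb' : (a + c) * (b ^ 2 - r ^ 2) + 2 * b * r = 0 := by
    rcases mul_eq_zero.1 h2 with h | h
    · exact absurd (sub_eq_zero.1 h) hac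
    · exact h
  have hs2 : a * b + b * c + c * a = -(r ^ 2 + 2 * r) := by
    have h3 : (a - b) * (a * b + b * c + c * a + (r ^ 2 + 2 * r)) = 0 := by
      linear_combination ha' - hb'
    rcases mul_eq_zero.1 h3 with h | h
    · exact absurd (sub_eq_zero.1 h) hab
    · linarith
  rw [orthocenter_coord a b c A B C hA hB hC hind, hs2]
  ring
end

section
/- Let c > 0 and let x1, x2, x3 be pairwise distinct real numbers. Consider the triangle in ℝ² with vertices (x1, x1²/(4c)), (x2, x2²/(4c)), (x3, x3²/(4c)), inscribed in the parabola x² = 4cy. Suppose the circle with center (0, 5c/4) and radius c is the incircle of this triangle, i.e. the distance from (0, 5c/4) to each of the three sidelines equals c and the point (0, 5c/4) lies in the interior of the triangle. Then the orthocenter of the triangle has second coordinate (ordinate) equal to −7c/4. -/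
set_option maxHeartbeats 1000000

open Affine Metric

lemma tangent_eq (c x y : ℝ) (hc : 0 < c) (hxy : x ≠ y)
    (P Q I : EuclideanSpace ℝ (Fin 2))
    (hP : P = ![x, x ^ 2 / (4 * c)]) (hQ : Q = ![y, y ^ 2 / (4 * c)])
    (hI : I = ![0, 5 * c / 4])
    (hd : Metric.infDist I (affineSpan ℝ {P, Q} : Set (EuclideanSpace ℝ (Fin 2))) = c) :
    (x * y) ^ 2 + 8 * c ^ 2 * (x * y) + 9 * c ^ 4 - c ^ 2 * x ^ 2 - c ^ 2 * y ^ 2 = 0 := by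
  have hc' : (c : ℝ) ≠ 0 := ne_of_gt hc
  have hyx : y - x ≠ 0 := sub_ne_zero.mpr (Ne.symm hxy)
  have hD : (x + y) ^ 2 + 16 * c ^ 2 ≠ 0 := by positivity
  set lam : ℝ := (5 * c ^ 2 + x * y) / ((x + y) ^ 2 + 16 * c ^ 2) with hlam
  set r : ℝ := (lam * (x + y) - x) / (y - x) with hr
  set F : EuclideanSpace ℝ (Fin 2) := r • (Q -ᵥ P) +ᵥ P with hF
  have hFmem : F ∈ affineSpan ℝ ({P, Q} : Set (EuclideanSpace ℝ (Fin 2))) :=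
    smul_vsub_vadd_mem_affineSpan_pair r P Q
  -- coordinates of F
  have hF0 : F 0 = x + r * (y - x) := by
    simp [hF, hP, hQ, vsub_eq_sub, vadd_eq_add]
    ring
  have hF1 : F 1 = x ^ 2 / (4 * c) + r * (y ^ 2 / (4 * c) - x ^ 2 / (4 * c)) := by
    simp [hF, hP, hQ, vsub_eq_sub, vadd_eq_add]
    ring
  -- orthogonality
  have horth : (inner ℝ (I - F) (Q - P) : ℝ) = 0 := by
    rw [PiLp.inner_apply]
    simp only [Fin.sum_univ_two, RCLike.inner_apply, conj_trivial, PiLp.sub_apply]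
    rw [hF0, hF1, hP, hQ, hI]
    simp only [Matrix.cons_val_zero, Matrix.cons_val_one, Matrix.head_cons]
    rw [hr, hlam]
    field_simp
    ring
  -- infDist = dist I F
  have hkey : Metric.infDist I (affineSpan ℝ ({P, Q} : Set (EuclideanSpace ℝ (Fin 2)))) = dist I F := by
    refine le_antisymm (infDist_le_dist_of_mem hFmem) ?_
    rw [Metric.infDist_eq_iInf]
    have : Nonempty (affineSpan ℝ ({P, Q} : Set (EuclideanSpace ℝ (Fin 2))) : Set (EuclideanSpace ℝ (Fin 2))) :=
      ⟨⟨P, left_mem_affineSpan_pair ℝ P Q⟩⟩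
    refine le_ciInf fun q => ?_
    obtain ⟨t, ht⟩ : ∃ t : ℝ, t • (Q -ᵥ P) = (q : EuclideanSpace ℝ (Fin 2)) -ᵥ P := by
      refine mem_vectorSpan_pair_rev.mp ?_
      have := AffineSubspace.vsub_mem_direction q.2 (left_mem_affineSpan_pair ℝ P Q)
      rwa [direction_affineSpan] at this
    have hq : (q : EuclideanSpace ℝ (Fin 2)) = t • (Q - P) + P := by
      rw [vsub_eq_sub] at ht
      rw [ht, vsub_eq_sub]; abel
    have hexp : I - (q : EuclideanSpace ℝ (Fin 2)) = (I - F) + (r - t) • (Q - P) := by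
      rw [hq, hF, vsub_eq_sub, vadd_eq_add, sub_smul]
      abel
    have hi2 : (inner ℝ (I - F) ((r - t) • (Q - P)) : ℝ) = 0 := by
      rw [real_inner_smul_right, horth, mul_zero]
    have hn : ‖I - (q : EuclideanSpace ℝ (Fin 2))‖ ^ 2 = ‖I - F‖ ^ 2 + ‖(r - t) • (Q - P)‖ ^ 2 := by
      rw [hexp, norm_add_sq_real, hi2]; ring
    have h1 : ‖I - F‖ ^ 2 ≤ ‖I - (q : EuclideanSpace ℝ (Fin 2))‖ ^ 2 := by
      rw [hn]; nlinarith [sq_nonneg ‖(r - t) • (Q - P)‖]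
    have := norm_nonneg (I - F)
    have := norm_nonneg (I - (q : EuclideanSpace ℝ (Fin 2)))
    rw [dist_eq_norm, dist_eq_norm]
    nlinarith
  rw [hkey] at hd
  have hd2 : (I 0 - F 0) ^ 2 + (I 1 - F 1) ^ 2 = c ^ 2 := by
    rw [EuclideanSpace.dist_eq] at hd
    have h2 := congrArg (· ^ 2) hd
    simp only at h2
    rw [Real.sq_sqrt (by positivity)] at h2
    simpa [Fin.sum_univ_two, Real.dist_eq, sq_abs] using h2
  have e0 : I 0 - F 0 = -(lam * (x + y)) := by
    rw [hF0, hI]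
    simp only [Matrix.cons_val_zero]
    rw [hr]
    field_simp
    ring
  have e1 : I 1 - F 1 = 4 * c * lam := by
    rw [hF1, hI]
    simp only [Matrix.cons_val_one, Matrix.head_cons, Matrix.cons_val_zero]
    rw [hr, hlam]
    field_simp
    ring
  rw [e0, e1] at hd2
  have hlamsq : lam ^ 2 * ((x + y) ^ 2 + 16 * c ^ 2) = c ^ 2 := by
    linear_combination hd2
  have h5 : lam * ((x + y) ^ 2 + 16 * c ^ 2) = 5 * c ^ 2 + x * y := by
    rw [hlam]; field_simp
  linear_combination ((x + y) ^ 2 + 16 * c ^ 2) * hlamsq -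
    (lam * ((x + y) ^ 2 + 16 * c ^ 2) + (5 * c ^ 2 + x * y)) * h5

theorem steiner_soddy_parabola_orthocenter_ordinate
    (c : ℝ) (hc : 0 < c)
    (x1 x2 x3 : ℝ) (h12 : x1 ≠ x2) (h13 : x1 ≠ x3) (h23 : x2 ≠ x3)
    (A B C I : EuclideanSpace ℝ (Fin 2))
    (hA : A = ![x1, x1 ^ 2 / (4 * c)]) (hB : B = ![x2, x2 ^ 2 / (4 * c)])
    (hC : C = ![x3, x3 ^ 2 / (4 * c)])
    (hI : I = ![0, 5 * c / 4])
    (hind : AffineIndependent ℝ ![A, B, C])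
    (hdAB : Metric.infDist I (affineSpan ℝ {A, B} : Set (EuclideanSpace ℝ (Fin 2))) = c)
    (hdBC : Metric.infDist I (affineSpan ℝ {B, C} : Set (EuclideanSpace ℝ (Fin 2))) = c)
    (hdCA : Metric.infDist I (affineSpan ℝ {C, A} : Set (EuclideanSpace ℝ (Fin 2))) = c)
    (hint : I ∈ interior (convexHull ℝ ({A, B, C} : Set (EuclideanSpace ℝ (Fin 2))))) :
    Affine.Triangle.orthocenter
      (⟨![A, B, C], hind⟩ : Affine.Triangle ℝ (EuclideanSpace ℝ (Fin 2))) 1 =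
      -(7 * c / 4) := by
  have hc' : (c : ℝ) ≠ 0 := ne_of_gt hc
  have E12 := tangent_eq c x1 x2 hc h12 A B I hA hB hI hdAB
  have E23 := tangent_eq c x2 x3 hc h23 B C I hB hC hI hdBC
  have E13 := tangent_eq c x3 x1 hc (Ne.symm h13) C A I hC hA hI hdCA
  -- algebra: e2 = -9c^2
  have hF1 : x1 ^ 2 * (x2 + x3) + 8 * c ^ 2 * x1 - c ^ 2 * (x2 + x3) = 0 := by
    have h : (x2 - x3) * (x1 ^ 2 * (x2 + x3) + 8 * c ^ 2 * x1 - c ^ 2 * (x2 + x3)) = 0 := by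
      linear_combination E12 - E13
    exact (mul_eq_zero.mp h).resolve_left (sub_ne_zero.mpr h23)
  have hF2 : x2 ^ 2 * (x1 + x3) + 8 * c ^ 2 * x2 - c ^ 2 * (x1 + x3) = 0 := by
    have h : (x1 - x3) * (x2 ^ 2 * (x1 + x3) + 8 * c ^ 2 * x2 - c ^ 2 * (x1 + x3)) = 0 := by
      linear_combination E12 - E23
    exact (mul_eq_zero.mp h).resolve_left (sub_ne_zero.mpr h13)
  have he2 : x1 * x2 + x1 * x3 + x2 * x3 = -(9 * c ^ 2) := by
    have h : (x1 - x2) * (x1 * x2 + x1 * x3 + x2 * x3 + 9 * c ^ 2) = 0 := by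
      linear_combination hF1 - hF2
    have := (mul_eq_zero.mp h).resolve_left (sub_ne_zero.mpr h12)
    linarith
  -- the orthocenter candidate
  set t : Affine.Triangle ℝ (EuclideanSpace ℝ (Fin 2)) := ⟨![A, B, C], hind⟩ with ht
  set H : EuclideanSpace ℝ (Fin 2) :=
    WithLp.toLp 2 ![x1 + x2 + x3 + (x1 + x2) * (x1 + x3) * (x2 + x3) / (16 * c ^ 2), -(7 * c / 4)] with hH
  have hspan : affineSpan ℝ (Set.range t.points) = ⊤ := by
    rw [AffineIndependent.affineSpan_eq_top_iff_card_eq_finrank_add_one t.independent]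
    simp
  have hHmem : H ∈ affineSpan ℝ (Set.range t.points) := by
    rw [hspan]; exact AffineSubspace.mem_top _ _ _
  have key0 : (x2 - x3) * (x1 + x2 + x3 + (x1 + x2) * (x1 + x3) * (x2 + x3) / (16 * c ^ 2) - x1)
      + (x2 ^ 2 / (4 * c) - x3 ^ 2 / (4 * c)) * (-(7 * c / 4) - x1 ^ 2 / (4 * c)) = 0 := by
    field_simp
    linear_combination (16 * (x2 - x3) * (x2 + x3)) * he2
  have key1 : (x1 - x3) * (x1 + x2 + x3 + (x1 + x2) * (x1 + x3) * (x2 + x3) / (16 * c ^ 2) - x2)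
      + (x1 ^ 2 / (4 * c) - x3 ^ 2 / (4 * c)) * (-(7 * c / 4) - x2 ^ 2 / (4 * c)) = 0 := by
    field_simp
    linear_combination (16 * (x1 - x3) * (x1 + x3)) * he2
  have himg0 : t.points '' ↑(Finset.univ.erase (0 : Fin 3)) = {B, C} := by
    have : (Finset.univ.erase (0 : Fin 3)) = {1, 2} := by decide
    rw [this]
    rw [Finset.coe_insert, Finset.coe_singleton, Set.image_insert_eq, Set.image_singleton]
    rfl
  have himg1 : t.points '' ↑(Finset.univ.erase (1 : Fin 3)) = {A, C} := by
    have : (Finset.univ.erase (1 : Fin 3)) = {0, 2} := by decide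
    rw [this]
    rw [Finset.coe_insert, Finset.coe_singleton, Set.image_insert_eq, Set.image_singleton]
    rfl
  have halt0 : H ∈ t.altitude 0 := by
    rw [Affine.Simplex.altitude_def]
    refine (AffineSubspace.mem_inf_iff _ _ _).mpr ⟨?_, hHmem⟩
    rw [AffineSubspace.mem_mk',
      show ({0}ᶜ : Set (Fin 3)) = ↑(Finset.univ.erase (0 : Fin 3)) by ext; simp, himg0, direction_affineSpan, vectorSpan_pair,
      Submodule.mem_orthogonal_singleton_iff_inner_right]
    have hpt : t.points 0 = A := rfl
    rw [hpt, PiLp.inner_apply]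
    simp only [Fin.sum_univ_two, RCLike.inner_apply, conj_trivial, vsub_eq_sub, PiLp.sub_apply]
    rw [hH, hA, hB, hC]
    simp only [Matrix.cons_val_zero, Matrix.cons_val_one, Matrix.head_cons, PiLp.toLp_apply]
    linear_combination key0
  have halt1 : H ∈ t.altitude 1 := by
    rw [Affine.Simplex.altitude_def]
    refine (AffineSubspace.mem_inf_iff _ _ _).mpr ⟨?_, hHmem⟩
    rw [AffineSubspace.mem_mk',
      show ({1}ᶜ : Set (Fin 3)) = ↑(Finset.univ.erase (1 : Fin 3)) by ext; simp, himg1, direction_affineSpan, vectorSpan_pair,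
      Submodule.mem_orthogonal_singleton_iff_inner_right]
    have hpt : t.points 1 = B := rfl
    rw [hpt, PiLp.inner_apply]
    simp only [Fin.sum_univ_two, RCLike.inner_apply, conj_trivial, vsub_eq_sub, PiLp.sub_apply]
    rw [hH, hA, hB, hC]
    simp only [Matrix.cons_val_zero, Matrix.cons_val_one, Matrix.head_cons, PiLp.toLp_apply]
    linear_combination key1
  have horth := Affine.Triangle.eq_orthocenter_of_forall_mem_altitude
    (by decide : (0 : Fin 3) ≠ 1) halt0 halt1
  rw [← horth, hH]
  simp
end

section
/- Let N be a positive integer, d a natural number with d < N, and p a homogeneous polynomial of degree d in two real variables. Then for every φ ∈ ℝ, (1/N) · Σ_{j=0}^{N−1} p(cos(φ + 2πj/N), sin(φ + 2πj/N)) = (1/(2π)) · ∫₀^{2π} p(cos t, sin t) dt. In other words, p has the same average over the vertices of any regular N-gon inscribed in the unit circle as over the unit circle itself. -/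
open Real

private lemma avg_exp_aux (N : ℕ) (hN : 0 < N) (m : ℤ) (hm : m.natAbs < N) (φ : ℝ) :
    (1 / N : ℂ) * ∑ j ∈ Finset.range N,
        Complex.exp ((m : ℂ) * (↑(φ + 2 * π * j / N)) * Complex.I) =
    (1 / (2 * (π : ℂ))) * ∫ t in (0:ℝ)..(2*π), Complex.exp ((m : ℂ) * t * Complex.I) := by
  have hπ : (π : ℂ) ≠ 0 := by exact_mod_cast Real.pi_ne_zero
  have hNc : (N : ℂ) ≠ 0 := by exact_mod_cast hN.ne'
  rcases eq_or_ne m 0 with rfl | hm0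
  · simp only [Int.cast_zero, zero_mul, Complex.exp_zero, Finset.sum_const,
      Finset.card_range, nsmul_eq_mul, mul_one, intervalIntegral.integral_const,
      sub_zero, Complex.real_smul, Complex.ofReal_mul, Complex.ofReal_ofNat]
    field_simp
  · -- RHS is zero
    have hc : (m : ℂ) * Complex.I ≠ 0 := by
      simp [Complex.I_ne_zero, Int.cast_ne_zero, hm0]
    have hR : (∫ t in (0:ℝ)..(2*π), Complex.exp ((m : ℂ) * t * Complex.I)) = 0 := by
      have : ∀ t : ℝ, (m : ℂ) * t * Complex.I = ((m : ℂ) * Complex.I) * t := by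
        intro t; ring
      simp only [this]
      rw [integral_exp_mul_complex hc]
      have h1 : (m : ℂ) * Complex.I * ((2:ℝ)*π : ℝ) = (m : ℂ) * (2 * π * Complex.I) := by
        push_cast; ring
      rw [h1, Complex.exp_int_mul_two_pi_mul_I]
      simp
    -- LHS is zero
    set z : ℂ := Complex.exp ((m : ℂ) * (2 * π * Complex.I) / N) with hz
    have hterm : ∀ j : ℕ, Complex.exp ((m : ℂ) * (↑(φ + 2 * π * j / N)) * Complex.I)
        = Complex.exp ((m : ℂ) * φ * Complex.I) * z ^ j := by
      intro j
      rw [hz, ← Complex.exp_nat_mul, ← Complex.exp_add]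
      congr 1
      push_cast
      field_simp
    have hzN : z ^ N = 1 := by
      rw [hz, ← Complex.exp_nat_mul]
      have : (N : ℂ) * ((m : ℂ) * (2 * π * Complex.I) / N) = (m : ℂ) * (2 * π * Complex.I) := by
        field_simp
      rw [this, Complex.exp_int_mul_two_pi_mul_I]
    have hz1 : z ≠ 1 := by
      intro h
      rw [hz, Complex.exp_eq_one_iff] at h
      obtain ⟨n, hn⟩ := h
      have h2πI : (2 * (π:ℂ) * Complex.I) ≠ 0 :=
        mul_ne_zero (mul_ne_zero two_ne_zero hπ) Complex.I_ne_zero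
      have hmn : (m : ℂ) = n * N := by
        field_simp at hn
        have h2 : (m : ℂ) * (2 * (π:ℂ) * Complex.I) = ((n : ℂ) * N) * (2 * (π:ℂ) * Complex.I) := by
          linear_combination (2 * (π:ℂ) * Complex.I) * hn
        exact mul_right_cancel₀ h2πI h2
      have hmn' : m = n * N := by exact_mod_cast hmn
      rcases eq_or_ne n 0 with rfl | hn0
      · simp at hmn'; exact hm0 hmn'
      · have : N ≤ m.natAbs := by
          rw [hmn', Int.natAbs_mul]
          have : 1 ≤ n.natAbs := Int.natAbs_pos.mpr hn0
          simp [Int.natAbs_natCast]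
          nlinarith [Int.natAbs_natCast N]
        omega
    have hsum : ∑ j ∈ Finset.range N, z ^ j = 0 := by
      rw [geom_sum_eq hz1, hzN]
      simp
    simp only [hterm, ← Finset.mul_sum, hsum, mul_zero, hR]

private lemma trig_expand (a b : ℕ) (t : ℝ) :
    ((Real.cos t : ℂ))^a * ((Real.sin t : ℂ))^b =
    ∑ k ∈ Finset.range (a+1), ∑ l ∈ Finset.range (b+1),
      ((a.choose k : ℂ) * (b.choose l : ℂ) * (-1)^(b-l) / (2^a * (2*Complex.I)^b)) *
        Complex.exp (((2*(k+l) - (a+b) : ℤ) : ℂ) * t * Complex.I) := by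
  set u : ℂ := Complex.exp (t * Complex.I) with hu
  have hu0 : u ≠ 0 := Complex.exp_ne_zero _
  have hI : Complex.I * Complex.I = -1 := Complex.I_mul_I
  have hcos : (Real.cos t : ℂ) = (u + u⁻¹) / 2 := by
    rw [Complex.ofReal_cos, Complex.cos, hu, ← Complex.exp_neg]
    ring_nf
  have hsin : (Real.sin t : ℂ) = (u - u⁻¹) / (2 * Complex.I) := by
    rw [Complex.ofReal_sin, Complex.sin, hu, ← Complex.exp_neg]
    field_simp
    linear_combination (Complex.exp (-(↑t * Complex.I)) - Complex.exp (↑t * Complex.I)) * Complex.I_mul_I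
  rw [hcos, hsin, div_pow, div_pow, div_mul_div_comm, sub_eq_add_neg, add_pow, add_pow,
    Finset.sum_mul_sum, Finset.sum_div]
  refine Finset.sum_congr rfl fun k hk => ?_
  rw [Finset.sum_div]
  refine Finset.sum_congr rfl fun l hl => ?_
  have hk' : k ≤ a := Nat.lt_succ_iff.mp (Finset.mem_range.mp hk)
  have hl' : l ≤ b := Nat.lt_succ_iff.mp (Finset.mem_range.mp hl)
  have hexp : Complex.exp (((2*(k+l) - (a+b) : ℤ) : ℂ) * t * Complex.I)
      = u ^ (k + l) * (u⁻¹) ^ ((a - k) + (b - l)) := by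
    have h1 : ((2*(k+l) - (a+b) : ℤ) : ℂ) * t * Complex.I
        = ((k + l : ℕ) : ℂ) * (t * Complex.I) +
          (-((((a-k) + (b-l) : ℕ)) : ℂ)) * (t * Complex.I) := by
      push_cast [Nat.cast_sub hk', Nat.cast_sub hl']
      ring
    rw [h1, Complex.exp_add, neg_mul, Complex.exp_neg, Complex.exp_nat_mul,
      Complex.exp_nat_mul, ← hu, inv_pow]
  rw [hexp]
  rw [neg_pow]
  ring

private lemma avg_monomial (N : ℕ) (hN : 0 < N) (a b : ℕ) (hab : a + b < N) (φ : ℝ) :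
    (1 / N : ℂ) * ∑ j ∈ Finset.range N,
        ((Real.cos (φ + 2 * π * j / N) : ℂ))^a * ((Real.sin (φ + 2 * π * j / N) : ℂ))^b =
    (1 / (2 * (π:ℂ))) * ∫ t in (0:ℝ)..(2*π),
        ((Real.cos t : ℂ))^a * ((Real.sin t : ℂ))^b := by
  simp only [trig_expand]
  rw [intervalIntegral.integral_finset_sum (fun k _ => by
    apply Continuous.intervalIntegrable; fun_prop)]
  have hinner : ∀ k ∈ Finset.range (a+1),
      (∫ t in (0:ℝ)..(2*π), ∑ l ∈ Finset.range (b+1),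
        ((a.choose k : ℂ) * (b.choose l : ℂ) * (-1)^(b-l) / (2^a * (2*Complex.I)^b)) *
          Complex.exp (((2*(k+l) - (a+b) : ℤ) : ℂ) * t * Complex.I))
      = ∑ l ∈ Finset.range (b+1),
          ∫ t in (0:ℝ)..(2*π),
            ((a.choose k : ℂ) * (b.choose l : ℂ) * (-1)^(b-l) / (2^a * (2*Complex.I)^b)) *
              Complex.exp (((2*(k+l) - (a+b) : ℤ) : ℂ) * t * Complex.I) := by
    intro k _
    exact intervalIntegral.integral_finset_sum (fun l _ => by
      apply Continuous.intervalIntegrable; fun_prop)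
  rw [Finset.sum_congr rfl hinner]
  rw [Finset.sum_comm]
  simp only [Finset.mul_sum]
  refine Finset.sum_congr rfl fun k hk => ?_
  rw [Finset.sum_comm]
  refine Finset.sum_congr rfl fun l hl => ?_
  have hk' : k ≤ a := Nat.lt_succ_iff.mp (Finset.mem_range.mp hk)
  have hl' : l ≤ b := Nat.lt_succ_iff.mp (Finset.mem_range.mp hl)
  have hm : (2*((k:ℤ)+l) - ((a:ℤ)+b)).natAbs < N := by omega
  have hA := avg_exp_aux N hN (2*((k:ℤ)+l) - ((a:ℤ)+b)) hm φ
  have hcast : ((2*(k+l) - (a+b) : ℤ) : ℂ) = ((2*((k:ℤ)+l) - ((a:ℤ)+b) : ℤ) : ℂ) := by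
    push_cast; ring
  rw [intervalIntegral.integral_const_mul]
  simp only [← Finset.mul_sum]
  linear_combination ((a.choose k : ℂ) * (b.choose l : ℂ) * (-1)^(b-l) / (2^a * (2*Complex.I)^b)) * hA

theorem regular_ngon_average_eq_circle_average
    (N : ℕ) (hN : 0 < N) (d : ℕ) (hd : d < N)
    (p : MvPolynomial (Fin 2) ℝ) (hp : p.IsHomogeneous d) (φ : ℝ) :
    (1 / N : ℝ) * ∑ j ∈ Finset.range N,
        MvPolynomial.eval
          ![Real.cos (φ + 2 * π * j / N), Real.sin (φ + 2 * π * j / N)] p =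
      (1 / (2 * π)) * ∫ t in (0 : ℝ)..(2 * π),
        MvPolynomial.eval ![Real.cos t, Real.sin t] p := by
  classical
  have hdeg : ∀ s ∈ p.support, s 0 + s 1 = d := by
    intro s hs
    have h := hp (MvPolynomial.mem_support_iff.mp hs)
    rw [Finsupp.weight_apply, Finsupp.sum_fintype] at h
    · rw [Fin.sum_univ_two] at h; simpa using h
    · intro i; simp
  have heval : ∀ t : ℝ, ((MvPolynomial.eval ![Real.cos t, Real.sin t] p : ℝ) : ℂ)
      = ∑ s ∈ p.support, ((MvPolynomial.coeff s p : ℝ) : ℂ) *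
          ((Real.cos t : ℂ)) ^ (s 0) * ((Real.sin t : ℂ)) ^ (s 1) := by
    intro t
    rw [MvPolynomial.eval_eq']
    push_cast
    refine Finset.sum_congr rfl fun s _ => ?_
    rw [Fin.prod_univ_two]
    simp [mul_assoc]
  have step : (1 / (N:ℂ)) * ∑ j ∈ Finset.range N,
        ((MvPolynomial.eval
          ![Real.cos (φ + 2 * π * j / N), Real.sin (φ + 2 * π * j / N)] p : ℝ) : ℂ)
      = (1 / (2 * (π:ℂ))) * ∫ t in (0:ℝ)..(2*π),
          ((MvPolynomial.eval ![Real.cos t, Real.sin t] p : ℝ) : ℂ) := by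
    simp only [heval]
    rw [intervalIntegral.integral_finset_sum (fun s _ => by
      apply Continuous.intervalIntegrable; fun_prop)]
    rw [Finset.sum_comm]
    conv_lhs => rw [Finset.mul_sum]
    conv_rhs => rw [Finset.mul_sum]
    refine Finset.sum_congr rfl fun s hs => ?_
    have hsd : s 0 + s 1 < N := by rw [hdeg s hs]; exact hd
    have hA := avg_monomial N hN (s 0) (s 1) hsd φ
    have h1 : (∑ j ∈ Finset.range N, ((MvPolynomial.coeff s p : ℝ) : ℂ) *
          ((Real.cos (φ + 2 * π * j / N) : ℂ)) ^ s 0 * ((Real.sin (φ + 2 * π * j / N) : ℂ)) ^ s 1)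
        = ((MvPolynomial.coeff s p : ℝ) : ℂ) * ∑ j ∈ Finset.range N,
            ((Real.cos (φ + 2 * π * j / N) : ℂ)) ^ s 0 * ((Real.sin (φ + 2 * π * j / N) : ℂ)) ^ s 1 := by
      rw [Finset.mul_sum]
      exact Finset.sum_congr rfl fun j _ => mul_assoc _ _ _
    have h2 : (∫ t in (0:ℝ)..(2*π), ((MvPolynomial.coeff s p : ℝ) : ℂ) *
          ((Real.cos t : ℂ)) ^ s 0 * ((Real.sin t : ℂ)) ^ s 1)
        = ((MvPolynomial.coeff s p : ℝ) : ℂ) * ∫ t in (0:ℝ)..(2*π),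
            ((Real.cos t : ℂ)) ^ s 0 * ((Real.sin t : ℂ)) ^ s 1 := by
      simp only [mul_assoc]
      exact intervalIntegral.integral_const_mul _ _
    rw [h1, h2, mul_left_comm, hA, mul_left_comm]
  rw [intervalIntegral.integral_ofReal] at step
  apply Complex.ofReal_injective
  push_cast
  convert step using 2
end
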